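/- arXiv:2012.01034 — 7 statements merged into one kernel-verified Lean document; each statement's English description precedes it below -/
import Mathlib

section
/- If φ belongs to the Sobolev space W^1_2(U) with zero boundary trace (i.e. φ ∈ H^1_0(U)) and η ∈ W^1_2(U) on a bounded Lipschitz domain U ⊂ ℝ², then ∫_U (∂₁φ ∂₂η − ∂₂φ ∂₁η) dx₁dx₂ = 0. -/
/-!
For `ψ` of class `C²` with compact support, integrating by parts in both terms moves all
derivatives onto `ψ`: each of `∫ ∂ᵥψ ∂_wη` and `∫ ∂_wψ ∂ᵥη` equals `-∫ D²ψ(v, w) η`, by symmetry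
of the second derivative. A general `C¹` function `φ` with compact support is approximated by
mollifications, whose derivatives are uniformly bounded, supported in a fixed compact set, and
converge pointwise to those of `φ`; dominated convergence transfers the identity to `φ`.
-/

open MeasureTheory Filter Set Metric ContinuousLinearMap
open scoped Convolution Topology Pointwise

theorem tendsto_integral_mul_of_tendsto_of_tsupport_subset {X 𝕜 : Type*} [TopologicalSpace X]
    [T2Space X] [MeasurableSpace X] [OpensMeasurableSpace X] {μ : Measure X}
    [IsFiniteMeasureOnCompacts μ] [NormedRing 𝕜] [NormedSpace ℝ 𝕜]
    [SecondCountableTopologyEither X 𝕜] {F : ℕ → X → 𝕜} {f g : X → 𝕜} {K : Set X}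
    (hK : IsCompact K) {C : ℝ} (hF : ∀ n, Continuous (F n)) (hFK : ∀ n, tsupport (F n) ⊆ K)
    (hC : ∀ n x, ‖F n x‖ ≤ C) (hlim : ∀ x, Tendsto (F · x) atTop (𝓝 (f x)))
    (hg : Continuous g) :
    Tendsto (fun n ↦ ∫ x, F n x * g x ∂μ) atTop (𝓝 (∫ x, f x * g x ∂μ)) := by
  obtain ⟨D, hD⟩ := hK.exists_bound_of_continuousOn hg.continuousOn
  refine tendsto_integral_of_dominated_convergence (K.indicator fun _ ↦ C * D)
    (fun n ↦ ((hF n).mul hg).aestronglyMeasurable)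
    ((integrable_indicator_iff hK.measurableSet).2 (integrableOn_const hK.measure_lt_top.ne))
    (fun n ↦ .of_forall fun x ↦ ?_) (.of_forall fun x ↦ (hlim x).mul_const (g x))
  by_cases hx : x ∈ K
  · rw [indicator_of_mem hx]
    exact (norm_mul_le _ _).trans
      (mul_le_mul (hC n x) (hD x hx) (norm_nonneg _) ((norm_nonneg _).trans (hC n x)))
  · rw [indicator_of_notMem hx, image_eq_zero_of_notMem_tsupport fun h ↦ hx (hFK n h), zero_mul,
      norm_zero]

namespace ContDiffBump

variable {E E' : Type*} [NormedAddCommGroup E] [NormedSpace ℝ E] [FiniteDimensional ℝ E]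
  [MeasurableSpace E] [BorelSpace E] {μ : Measure E} [μ.IsAddHaarMeasure]
  [NormedAddCommGroup E'] [NormedSpace ℝ E']

theorem norm_normed_convolution_le [CompleteSpace E'] (ρ : ContDiffBump (0 : E)) {g : E → E'}
    (hg : AEStronglyMeasurable g μ) {M : ℝ} (hM : ∀ x, ‖g x‖ ≤ M) (x : E) :
    ‖(ρ.normed μ ⋆[lsmul ℝ ℝ, μ] g) x‖ ≤ M := by
  simpa using dist_convolution_le (z₀ := 0) ((norm_nonneg _).trans (hM 0))
    ρ.support_normed_eq.subset ρ.nonneg_normed ρ.integral_normed hg (fun y _ ↦ by simpa using hM y)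

theorem fderiv_normed_convolution_apply (ρ : ContDiffBump (0 : E)) {φ : E → E'}
    (hφ : ContDiff ℝ 1 φ) (hs : HasCompactSupport φ) (x v : E) :
    fderiv ℝ (ρ.normed μ ⋆[lsmul ℝ ℝ, μ] φ) x v =
      (ρ.normed μ ⋆[lsmul ℝ ℝ, μ] fun y ↦ fderiv ℝ φ y v) x := by
  have hρ : LocallyIntegrable (ρ.normed μ) μ := ρ.integrable_normed.locallyIntegrable
  rw [(hs.hasFDerivAt_convolution_right _ hρ hφ x).fderiv]
  exact convolution_precompR_apply _ hρ (hs.fderiv ℝ) (hφ.continuous_fderiv one_ne_zero) x v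

end ContDiffBump

section

variable {E : Type*} [NormedAddCommGroup E] [NormedSpace ℝ E] [FiniteDimensional ℝ E]
  [MeasurableSpace E] [BorelSpace E]

theorem HasCompactSupport.exists_contDiff_tendsto_fderiv {E' : Type*} [NormedAddCommGroup E']
    [NormedSpace ℝ E'] [CompleteSpace E'] {φ : E → E'} (hφ : ContDiff ℝ 1 φ)
    (hs : HasCompactSupport φ) :
    ∃ (ψ : ℕ → E → E') (K : Set E) (C : ℝ), IsCompact K ∧ (∀ n, ContDiff ℝ 2 (ψ n)) ∧
      (∀ n, tsupport (ψ n) ⊆ K) ∧ (∀ n x v, ‖fderiv ℝ (ψ n) x v‖ ≤ C * ‖v‖) ∧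
      ∀ x v, Tendsto (fun n ↦ fderiv ℝ (ψ n) x v) atTop (𝓝 (fderiv ℝ φ x v)) := by
  let μ : Measure E := Measure.addHaar
  let ρ : ℕ → ContDiffBump (0 : E) := fun n ↦
    ⟨(n + 1 : ℝ)⁻¹ / 2, (n + 1 : ℝ)⁻¹, by positivity, half_lt_self (by positivity)⟩
  have hρ : Tendsto (fun n ↦ (ρ n).rOut) atTop (𝓝 0) :=
    tendsto_inv_atTop_zero.comp (tendsto_natCast_atTop_atTop.atTop_add tendsto_const_nhds)
  have hφ' : Continuous (fderiv ℝ φ) := hφ.continuous_fderiv one_ne_zero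
  obtain ⟨C, hC⟩ := hφ'.bounded_above_of_compact_support (hs.fderiv ℝ)
  have hK : IsCompact (closedBall (0 : E) 1 + tsupport φ) := (isCompact_closedBall _ _).add hs
  refine ⟨fun n ↦ (ρ n).normed μ ⋆[lsmul ℝ ℝ, μ] φ, _, C, hK, fun n ↦ ?_, fun n ↦ ?_,
    fun n x v ↦ ?_, fun x v ↦ ?_⟩
  · exact (ρ n).hasCompactSupport_normed.contDiff_convolution_left _ (ρ n).contDiff_normed
      hφ.continuous.locallyIntegrable
  · refine closure_minimal ((support_convolution_subset _).trans
      (add_subset_add ?_ subset_closure)) hK.isClosed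
    rw [(ρ n).support_normed_eq]
    exact ball_subset_closedBall.trans
      (closedBall_subset_closedBall (inv_le_one_of_one_le₀ (by simp)))
  · rw [(ρ n).fderiv_normed_convolution_apply hφ hs]
    exact (ρ n).norm_normed_convolution_le (hφ'.clm_apply continuous_const).aestronglyMeasurable
      (fun y ↦ (le_opNorm _ _).trans (by gcongr; exact hC y)) x
  · simp_rw [(ρ _).fderiv_normed_convolution_apply hφ hs]
    exact ContDiffBump.convolution_tendsto_right_of_continuous hρ
      (hφ'.clm_apply continuous_const) x

variable {μ : Measure E} [μ.IsAddHaarMeasure] {𝕜 : Type*} [NormedField 𝕜] [NormedAlgebra ℝ 𝕜]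

theorem integral_fderiv_mul_fderiv_comm_of_contDiff_two {ψ η : E → 𝕜} (hψ : ContDiff ℝ 2 ψ)
    (hψs : HasCompactSupport ψ) (hη : ContDiff ℝ 1 η) (v w : E) :
    ∫ x, fderiv ℝ ψ x v * fderiv ℝ η x w ∂μ = ∫ x, fderiv ℝ ψ x w * fderiv ℝ η x v ∂μ := by
  have hψ' : ContDiff ℝ 1 (fderiv ℝ ψ) := hψ.fderiv_right (by norm_num)
  have integrable {f g : E → 𝕜} (hf : Continuous f) (hfs : HasCompactSupport f)
      (hg : Continuous g) : Integrable (fun x ↦ f x * g x) μ :=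
    (hf.mul hg).integrable_of_hasCompactSupport hfs.mul_right
  have ibp (v w : E) : ∫ x, fderiv ℝ ψ x v * fderiv ℝ η x w ∂μ =
      -∫ x, fderiv ℝ (fderiv ℝ ψ) x w v * η x ∂μ := by
    have hf : ContDiff ℝ 1 (fderiv ℝ ψ · v) := hψ'.clm_apply contDiff_const
    have hfs : HasCompactSupport (fderiv ℝ ψ · v) := hψs.fderiv_apply ℝ v
    have hf' (x : E) : fderiv ℝ (fderiv ℝ ψ · v) x w = fderiv ℝ (fderiv ℝ ψ) x w v := by
      rw [fderiv_clm_apply (hψ'.differentiable one_ne_zero x) (differentiableAt_const v)]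
      simp
    rw [integral_mul_fderiv_eq_neg_fderiv_mul_of_integrable
      (integrable ((hf.continuous_fderiv one_ne_zero).clm_apply continuous_const)
        (hfs.fderiv_apply ℝ w) hη.continuous)
      (integrable hf.continuous hfs ((hη.continuous_fderiv one_ne_zero).clm_apply continuous_const))
      (integrable hf.continuous hfs hη.continuous)
      (fun x _ ↦ hf.differentiable one_ne_zero x) (fun x _ ↦ hη.differentiable one_ne_zero x)]
    simp_rw [hf']
  simp_rw [ibp v w, ibp w v, (hψ.contDiffAt.isSymmSndFDerivAt (by simp)) w v]

theorem integral_fderiv_mul_fderiv_comm [CompleteSpace 𝕜] {φ η : E → 𝕜} (hφ : ContDiff ℝ 1 φ)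
    (hφs : HasCompactSupport φ) (hη : ContDiff ℝ 1 η) (v w : E) :
    ∫ x, fderiv ℝ φ x v * fderiv ℝ η x w ∂μ = ∫ x, fderiv ℝ φ x w * fderiv ℝ η x v ∂μ := by
  obtain ⟨ψ, K, C, hK, hψ, hψK, hψC, hψφ⟩ := hφs.exists_contDiff_tendsto_fderiv hφ
  have hη' : Continuous (fderiv ℝ η) := hη.continuous_fderiv one_ne_zero
  have lim (v w : E) : Tendsto (fun n ↦ ∫ x, fderiv ℝ (ψ n) x v * fderiv ℝ η x w ∂μ) atTop
      (𝓝 (∫ x, fderiv ℝ φ x v * fderiv ℝ η x w ∂μ)) :=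
    tendsto_integral_mul_of_tendsto_of_tsupport_subset hK
      (fun n ↦ ((hψ n).continuous_fderiv two_ne_zero).clm_apply continuous_const)
      (fun n ↦ (tsupport_fderiv_apply_subset ℝ v).trans (hψK n)) (fun n x ↦ hψC n x v)
      (fun x ↦ hψφ x v) (hη'.clm_apply continuous_const)
  refine tendsto_nhds_unique ((lim v w).congr fun n ↦ ?_) (lim w v)
  exact integral_fderiv_mul_fderiv_comm_of_contDiff_two (hψ n)
    (hK.of_isClosed_subset (isClosed_tsupport _) (hψK n)) hη v w

end

theorem integral_jacobian_zero_of_compact_support_general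
    (U : Set (ℝ × ℝ))
    (φ η : ℝ × ℝ → ℂ)
    (hφ : ContDiff ℝ 1 φ) (hφsupp : HasCompactSupport φ) (hφU : tsupport φ ⊆ U)
    (hη : ContDiff ℝ 1 η) :
    ∫ x in U,
      (fderiv ℝ φ x (1, 0) * fderiv ℝ η x (0, 1)
        - fderiv ℝ φ x (0, 1) * fderiv ℝ η x (1, 0)) = 0 := by
  have hzero (x : ℝ × ℝ) (hx : x ∉ U) : fderiv ℝ φ x (1, 0) * fderiv ℝ η x (0, 1)
      - fderiv ℝ φ x (0, 1) * fderiv ℝ η x (1, 0) = 0 := by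
    simp [fderiv_of_notMem_tsupport ℝ fun h ↦ hx (hφU h)]
  have hint (v w : ℝ × ℝ) : Integrable (fun x ↦ fderiv ℝ φ x v * fderiv ℝ η x w) :=
    Continuous.integrable_of_hasCompactSupport
      (((hφ.continuous_fderiv one_ne_zero).clm_apply continuous_const).mul
        ((hη.continuous_fderiv one_ne_zero).clm_apply continuous_const))
      (hφsupp.fderiv_apply ℝ v).mul_right
  rw [setIntegral_eq_integral_of_forall_compl_eq_zero hzero, integral_sub (hint _ _) (hint _ _),
    sub_eq_zero]
  exact integral_fderiv_mul_fderiv_comm hφ hφsupp hη _ _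

/-- If `φ` belongs to `H¹₀(U)` (modelled as a `C¹` function compactly
supported inside `U`) and `η ∈ H¹(U)` (modelled as a `C¹` function), on a bounded
connected open `U ⊆ ℝ²`, then `∫_U (∂₁φ ∂₂η − ∂₂φ ∂₁η) = 0`. -/
theorem integral_jacobian_zero_of_compact_support
    (U : Set (ℝ × ℝ)) (hUopen : IsOpen U) (hUbdd : Bornology.IsBounded U)
    (hUconn : IsConnected U)
    (φ η : ℝ × ℝ → ℂ)
    (hφ : ContDiff ℝ 1 φ) (hφsupp : HasCompactSupport φ) (hφU : tsupport φ ⊆ U)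
    (hη : ContDiff ℝ 1 η) :
    ∫ x in U,
      (fderiv ℝ φ x (1, 0) * fderiv ℝ η x (0, 1)
        - fderiv ℝ φ x (0, 1) * fderiv ℝ η x (1, 0)) = 0 :=
  integral_jacobian_zero_of_compact_support_general U φ η hφ hφsupp hφU hη
end

section
/- Under the same hypotheses, the bottom value λ_k/‖εμ‖_∞ is not an eigenvalue of the self-adjoint operator A_k^{el} associated with the form a_k: if p ∈ W^1_2(ℝ) satisfies a_k[p] = (λ_k/‖εμ‖_∞)∫_ℝ |p|² μ dz, then p ≡ 0. -/
/-! Since `ε μ ≤ K`, the term `(λ/K) ∫ μ ‖p‖²` is at most `λ ∫ ε⁻¹ ‖p‖²`, so the equation forces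
`∫ ε⁻¹ ‖p'‖² = 0`. Hence `p' = 0` a.e., `p` is constant by the fundamental theorem of calculus, and a
nonzero constant is not integrable on `ℝ` against a weight `μ ≥ μ₀ > 0`. -/

open MeasureTheory

section WeightedIntegrals

variable {α E : Type*} [MeasurableSpace α] {ν : Measure α} [NormedAddCommGroup E]

lemma integral_mul_le_mul_integral_inv_mul {ε μ h : α → ℝ} {K : ℝ}
    (hε : ∀ x, 0 < ε x) (hK : ∀ x, ε x * μ x ≤ K) (hh : ∀ x, 0 ≤ h x)
    (hμh : Integrable (fun x => μ x * h x) ν) (hεh : Integrable (fun x => (ε x)⁻¹ * h x) ν) :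
    ∫ x, μ x * h x ∂ν ≤ K * ∫ x, (ε x)⁻¹ * h x ∂ν := by
  rw [← integral_const_mul]
  refine integral_mono hμh (hεh.const_mul K) fun x => ?_
  have hμ : μ x ≤ K * (ε x)⁻¹ := by
    rw [← div_eq_mul_inv, le_div_iff₀ (hε x), mul_comm]
    exact hK x
  calc μ x * h x ≤ K * (ε x)⁻¹ * h x := mul_le_mul_of_nonneg_right hμ (hh x)
    _ = K * ((ε x)⁻¹ * h x) := mul_assoc _ _ _

lemma ae_eq_zero_of_integral_mul_norm_sq_eq_zero {w : α → ℝ} {f : α → E}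
    (hw : ∀ x, 0 < w x) (hf : Integrable (fun x => w x * ‖f x‖ ^ 2) ν)
    (h : ∫ x, w x * ‖f x‖ ^ 2 ∂ν = 0) : f =ᵐ[ν] 0 := by
  have hnonneg : 0 ≤ fun x => w x * ‖f x‖ ^ 2 := fun x => by have := hw x; positivity
  filter_upwards [(integral_eq_zero_iff_of_nonneg hnonneg hf).1 h] with x hx
  simpa [(hw x).ne'] using hx

lemma eq_zero_of_integrable_mul_norm_sq_const {w : α → ℝ} {w₀ : ℝ} {c : E}
    (hν : ν Set.univ = ⊤) (hw₀ : 0 < w₀) (hw : ∀ x, w₀ ≤ w x)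
    (hc : Integrable (fun x => w x * ‖c‖ ^ 2) ν) : c = 0 := by
  have hconst : Integrable (fun _ : α => w₀ * ‖c‖ ^ 2) ν := by
    refine hc.mono' aestronglyMeasurable_const (Filter.Eventually.of_forall fun x => ?_)
    rw [Real.norm_eq_abs, abs_of_nonneg (by positivity)]
    exact mul_le_mul_of_nonneg_right (hw x) (by positivity)
  rcases integrable_const_iff.1 hconst with h | h
  · simpa [hw₀.ne'] using h
  · exact absurd hν (measure_ne_top ν _)

lemma integral_inv_mul_norm_sq_eq_zero_of_integral_eq {ε μ : α → ℝ} {K lk : ℝ} {f g : α → E}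
    (hε : ∀ x, 0 < ε x) (hK : ∀ x, ε x * μ x ≤ K) (hK₀ : 0 < K) (hlk : 0 ≤ lk)
    (hg : Integrable (fun x => (ε x)⁻¹ * ‖g x‖ ^ 2) ν)
    (hf : Integrable (fun x => (ε x)⁻¹ * ‖f x‖ ^ 2) ν)
    (hfμ : Integrable (fun x => μ x * ‖f x‖ ^ 2) ν)
    (heq : ∫ x, (ε x)⁻¹ * (‖g x‖ ^ 2 + lk * ‖f x‖ ^ 2) ∂ν
      = (lk / K) * ∫ x, μ x * ‖f x‖ ^ 2 ∂ν) :
    ∫ x, (ε x)⁻¹ * ‖g x‖ ^ 2 ∂ν = 0 := by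
  have hsplit : ∫ x, (ε x)⁻¹ * (‖g x‖ ^ 2 + lk * ‖f x‖ ^ 2) ∂ν
      = ∫ x, (ε x)⁻¹ * ‖g x‖ ^ 2 ∂ν + lk * ∫ x, (ε x)⁻¹ * ‖f x‖ ^ 2 ∂ν := by
    rw [← integral_const_mul, ← integral_add hg (hf.const_mul lk)]
    congr 1 with x
    ring
  have hμ := integral_mul_le_mul_integral_inv_mul hε hK (fun x => sq_nonneg ‖f x‖) hfμ hf
  have hrayleigh : (lk / K) * ∫ x, μ x * ‖f x‖ ^ 2 ∂ν ≤ lk * ∫ x, (ε x)⁻¹ * ‖f x‖ ^ 2 ∂ν :=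
    calc (lk / K) * ∫ x, μ x * ‖f x‖ ^ 2 ∂ν
        ≤ (lk / K) * (K * ∫ x, (ε x)⁻¹ * ‖f x‖ ^ 2 ∂ν) := by gcongr
      _ = lk * ∫ x, (ε x)⁻¹ * ‖f x‖ ^ 2 ∂ν := by field_simp
  have hnonneg : 0 ≤ ∫ x, (ε x)⁻¹ * ‖g x‖ ^ 2 ∂ν :=
    integral_nonneg fun x => by have := hε x; positivity
  linarith

end WeightedIntegrals

lemma eq_of_hasDerivAt_of_ae_eq_zero {E : Type*} [NormedAddCommGroup E] [NormedSpace ℝ E]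
    [CompleteSpace E] {f f' : ℝ → E} (hf : ∀ x, HasDerivAt f (f' x) x)
    (hf' : f' =ᵐ[volume] 0) (a b : ℝ) : f a = f b := by
  have hint : IntervalIntegrable f' volume a b :=
    (intervalIntegrable_const (c := (0 : E))).congr_ae (ae_restrict_of_ae hf'.symm)
  have hftc := intervalIntegral.integral_eq_sub_of_hasDerivAt (fun x _ => hf x) hint
  rw [intervalIntegral.integral_zero_ae (hf'.mono fun x hx _ => hx)] at hftc
  exact (sub_eq_zero.1 hftc.symm).symm

theorem bottom_not_eigenvalue_general
    (ε μ : ℝ → ℝ) (ε₀ ε₁ μ₀ μ₁ K lk : ℝ)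
    (hε₀ : 0 < ε₀) (hμ₀ : 0 < μ₀)
    (hεb : ∀ z, ε₀ ≤ ε z ∧ ε z ≤ ε₁) (hμb : ∀ z, μ₀ ≤ μ z ∧ μ z ≤ μ₁)
    (hK : ∀ z, ε z * μ z ≤ K)
    (hlk : 0 < lk)
    (p p' : ℝ → ℂ)
    (hp : ∀ z, HasDerivAt p (p' z) z)
    (hp'L2 : Integrable (fun z => (ε z)⁻¹ * ‖p' z‖ ^ 2))
    (hpL2 : Integrable (fun z => (ε z)⁻¹ * ‖p z‖ ^ 2))
    (hpμ : Integrable (fun z => μ z * ‖p z‖ ^ 2))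
    (heq : ∫ z, (ε z)⁻¹ * (‖p' z‖ ^ 2 + lk * ‖p z‖ ^ 2)
      = (lk / K) * ∫ z, μ z * ‖p z‖ ^ 2) :
    ∀ z, p z = 0 := by
  have hε : ∀ z, 0 < ε z := fun z => hε₀.trans_le (hεb z).1
  have hK₀ : 0 < K := (mul_pos (hε 0) (hμ₀.trans_le (hμb 0).1)).trans_le (hK 0)
  have hp'0 : p' =ᵐ[volume] 0 :=
    ae_eq_zero_of_integral_mul_norm_sq_eq_zero (fun z => inv_pos.2 (hε z)) hp'L2
      (integral_inv_mul_norm_sq_eq_zero_of_integral_eq hε hK hK₀ hlk.le hp'L2 hpL2 hpμ heq)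
  have hconst : ∀ z, p z = p 0 := fun z => eq_of_hasDerivAt_of_ae_eq_zero hp hp'0 z 0
  have hp0 : p 0 = 0 := by
    refine eq_zero_of_integrable_mul_norm_sq_const Real.volume_univ hμ₀ (fun z => (hμb z).1) ?_
    simpa only [hconst] using hpμ
  intro z
  rw [hconst z, hp0]

/-- Under the hypotheses of Statement 5, the bottom value
`λ_k/‖εμ‖_∞` is not an eigenvalue of `A_k^{el}`: if `p ∈ W¹₂(ℝ)` satisfies
`a_k[p] = (λ_k/‖εμ‖_∞) ∫ |p|² μ`, then `p ≡ 0`. -/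
theorem bottom_not_eigenvalue
    (ε μ : ℝ → ℝ) (ε₀ ε₁ μ₀ μ₁ K lk : ℝ)
    (hmε : Measurable ε) (hmμ : Measurable μ)
    (hε₀ : 0 < ε₀) (hμ₀ : 0 < μ₀)
    (hεb : ∀ z, ε₀ ≤ ε z ∧ ε z ≤ ε₁) (hμb : ∀ z, μ₀ ≤ μ z ∧ μ z ≤ μ₁)
    (hK : ∀ z, ε z * μ z ≤ K)
    (hlk : 0 < lk)
    (p p' : ℝ → ℂ)
    (hp : ∀ z, HasDerivAt p (p' z) z)
    (hp'L2 : Integrable (fun z => (ε z)⁻¹ * ‖p' z‖ ^ 2))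
    (hpL2 : Integrable (fun z => (ε z)⁻¹ * ‖p z‖ ^ 2))
    (hpμ : Integrable (fun z => μ z * ‖p z‖ ^ 2))
    (heq : ∫ z, (ε z)⁻¹ * (‖p' z‖ ^ 2 + lk * ‖p z‖ ^ 2)
      = (lk / K) * ∫ z, μ z * ‖p z‖ ^ 2) :
    ∀ z, p z = 0 :=
  bottom_not_eigenvalue_general ε μ ε₀ ε₁ μ₀ μ₁ K lk hε₀ hμ₀ hεb hμb hK hlk p p' hp hp'L2 hpL2 hpμ
    heq
end

section
/- Let ε, μ : ℝ → ℝ with 0 < ε₀ ≤ ε ≤ ε₁, 0 < μ₀ ≤ μ ≤ μ₁, both in W^2_{1,loc}(ℝ), with sup_s ∫_s^{s+1}(|ε''| + |μ''|) < ∞. Define y(z) = ∫_0^z √(ε(s)μ(s)) ds and ε̃(y(z)) = ε(z), μ̃(y(z)) = μ(z). Then y : ℝ → ℝ is a strictly increasing bijection, ε̃, μ̃ ∈ W^2_{1,loc}(ℝ), ε₀ ≤ ε̃ ≤ ε₁, μ₀ ≤ μ̃ ≤ μ₁, and sup_t ∫_t^{t+1}(|ε̃''| + |μ̃''|) dy <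 ∞. -/
open MeasureTheory Set Filter

/-!
Since `y' = σ := √(εμ) ≥ c := √(ε₀μ₀) > 0`, `y` is an order isomorphism of `ℝ` whose inverse `g`
has derivative `1 / σ ∘ g`. Hence `ε̃ = ε ∘ g`, `ε̃' = (ε' / σ) ∘ g`, `ε̃'' = ((ε' / σ)' / σ) ∘ g`,
and the substitution `w = y z` turns `∫_t^{t+1} |ε̃''|` into `∫ |(ε' / σ)'|` over a `z`-interval of
length at most `1 / c`. There `(ε' / σ)' = ε'' / σ - ε' σ' / σ²` is at most `|ε''| / c` plus a
constant, because `ε'`, and with it `σ'`, is bounded.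
-/

theorem continuous_of_forall_hasDerivAt {f f' : ℝ → ℝ} (hf : ∀ z, HasDerivAt f (f' z) z) :
    Continuous f :=
  continuous_iff_continuousAt.2 fun z => (hf z).continuousAt

theorem MeasureTheory.LocallyIntegrable.intervalIntegrable {f : ℝ → ℝ} (hf : LocallyIntegrable f)
    (a b : ℝ) : IntervalIntegrable f volume a b :=
  (hf.integrableOn_isCompact isCompact_uIcc).intervalIntegrable

theorem MeasureTheory.LocallyIntegrable.abs {f : ℝ → ℝ} (hf : LocallyIntegrable f) :
    LocallyIntegrable fun x => |f x| :=
  fun x => (hf x).norm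

section UnitIntervals

variable {k : ℝ → ℝ} {S : ℝ}

theorem intervalIntegral_le_nat_mul (hk : LocallyIntegrable k)
    (hS : ∀ s, ∫ t in s..(s + 1), k t ≤ S) (a : ℝ) (n : ℕ) :
    ∫ t in a..(a + n), k t ≤ n * S := by
  induction n with
  | zero => simp
  | succ n ih =>
    rw [Nat.cast_succ, ← add_assoc, ← intervalIntegral.integral_add_adjacent_intervals
      (hk.intervalIntegrable _ _) (hk.intervalIntegrable _ _)]
    linarith [hS (a + n)]

theorem intervalIntegral_le_ceil_mul (hk : LocallyIntegrable k) (hk₀ : 0 ≤ k)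
    (hS : ∀ s, ∫ t in s..(s + 1), k t ≤ S) {a b L : ℝ} (hab : a ≤ b) (hL : b - a ≤ L) :
    ∫ t in a..b, k t ≤ ⌈L⌉₊ * S :=
  calc ∫ t in a..b, k t ≤ ∫ t in a..(a + ⌈L⌉₊), k t :=
        intervalIntegral.integral_mono_interval le_rfl hab (by linarith [Nat.le_ceil L])
          (ae_of_all _ hk₀) (hk.intervalIntegrable _ _)
    _ ≤ ⌈L⌉₊ * S := intervalIntegral_le_nat_mul hk hS a _

theorem intervalIntegral_le_mul_add_of_le {q : ℝ → ℝ} {a b : ℝ} (hk : LocallyIntegrable k)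
    (hq : LocallyIntegrable q) (ha : 0 ≤ a) (hkq : ∀ z, k z ≤ a * q z + b)
    (hS : ∀ s, ∫ t in s..(s + 1), q t ≤ S) (s : ℝ) :
    ∫ t in s..(s + 1), k t ≤ a * S + b :=
  calc ∫ t in s..(s + 1), k t ≤ ∫ t in s..(s + 1), (a * q t + b) :=
        intervalIntegral.integral_mono (by linarith) (hk.intervalIntegrable _ _)
          ((hq.intervalIntegrable _ _).const_mul a |>.add intervalIntegrable_const) hkq
    _ = a * (∫ t in s..(s + 1), q t) + b := by
        rw [intervalIntegral.integral_add ((hq.intervalIntegrable _ _).const_mul a)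
          intervalIntegrable_const, intervalIntegral.integral_const_mul]
        simp
    _ ≤ a * S + b := by gcongr; exact hS s

/-- The mean of `f'` over `[z, z + 1]` is `f (z + 1) - f z`, and `f'` deviates from `f' z` there
by at most `∫ |f''|`. -/
theorem abs_deriv_le_of_forall_mem_Icc {f f' f'' : ℝ → ℝ} {m M : ℝ} (hf : ∀ z, f z ∈ Icc m M)
    (hf' : ∀ z, HasDerivAt f (f' z) z) (hf'' : ∀ z, HasDerivAt f' (f'' z) z)
    (hf''i : LocallyIntegrable f'') (hk : LocallyIntegrable k) (hf''k : ∀ z, |f'' z| ≤ k z)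
    (hS : ∀ s, ∫ t in s..(s + 1), k t ≤ S) (z : ℝ) :
    |f' z| ≤ M - m + S := by
  have hf'c := continuous_of_forall_hasDerivAt hf''
  have hosc : ∀ t ∈ uIoc z (z + 1), ‖f' t - f' z‖ ≤ S := by
    intro t ht
    rw [uIoc_of_le (by linarith)] at ht
    rw [← intervalIntegral.integral_eq_sub_of_hasDerivAt (fun s _ => hf'' s)
      (hf''i.intervalIntegrable z t)]
    calc ‖∫ s in z..t, f'' s‖ ≤ ∫ s in z..t, k s :=
          intervalIntegral.norm_integral_le_of_norm_le ht.1.le (ae_of_all _ fun s _ => hf''k s)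
            (hk.intervalIntegrable _ _)
      _ ≤ ∫ s in z..(z + 1), k s :=
          intervalIntegral.integral_mono_interval le_rfl ht.1.le ht.2
            (ae_of_all _ fun s => (abs_nonneg _).trans (hf''k s)) (hk.intervalIntegrable _ _)
      _ ≤ S := hS z
  have hmean : ∫ t in z..(z + 1), (f' t - f' z) = f (z + 1) - f z - f' z := by
    rw [intervalIntegral.integral_sub (hf'c.intervalIntegrable _ _) intervalIntegrable_const,
      intervalIntegral.integral_eq_sub_of_hasDerivAt (fun s _ => hf' s)
        (hf'c.intervalIntegrable _ _)]
    simp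
  have h := intervalIntegral.norm_integral_le_of_norm_le_const hosc
  rw [hmean, Real.norm_eq_abs, add_sub_cancel_left, abs_one, mul_one, abs_le] at h
  obtain ⟨hz₀, hz₁⟩ := hf z
  obtain ⟨hz₀', hz₁'⟩ := hf (z + 1)
  rw [abs_le]
  constructor <;> linarith [h.1, h.2]

end UnitIntervals

section ChangeOfVariables

variable {y σ : ℝ → ℝ} {c : ℝ}

theorem mul_sub_le_sub_of_hasDerivAt (hd : ∀ z, HasDerivAt y (σ z) z) (hσ : ∀ z, c ≤ σ z)
    {a b : ℝ} (hab : a ≤ b) : c * (b - a) ≤ y b - y a :=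
  mul_sub_le_image_sub_of_le_deriv (fun z => (hd z).differentiableAt)
    (fun z => (hd z).deriv ▸ hσ z) hab

theorem exists_orderIso_eq_of_hasDerivAt (hc : 0 < c) (hd : ∀ z, HasDerivAt y (σ z) z)
    (hσ : ∀ z, c ≤ σ z) : ∃ e : ℝ ≃o ℝ, ⇑e = y := by
  have hmono : StrictMono y :=
    strictMono_of_deriv_pos fun z => (hd z).deriv ▸ hc.trans_le (hσ z)
  have hlin := (tendsto_id (α := ℝ)).const_mul_atTop hc
  have hsurj : Function.Surjective y := by
    refine (continuous_of_forall_hasDerivAt hd).surjective ?_ ?_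
    · refine tendsto_atTop_mono' _ ?_ (tendsto_atTop_add_const_right _ (y 0) hlin)
      filter_upwards [eventually_ge_atTop 0] with z hz
      dsimp only [id]
      linarith [mul_sub_le_sub_of_hasDerivAt hd hσ hz]
    · refine tendsto_atBot_mono' _ ?_ (tendsto_atBot_add_const_right _ (y 0)
        ((tendsto_id (α := ℝ)).const_mul_atBot hc))
      filter_upwards [eventually_le_atBot 0] with z hz
      dsimp only [id]
      linarith [mul_sub_le_sub_of_hasDerivAt hd hσ hz]
  exact ⟨hmono.orderIsoOfSurjective y hsurj, hmono.coe_orderIsoOfSurjective y hsurj⟩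

namespace OrderIso

variable (e : ℝ ≃o ℝ)

theorem hasDerivAt_comp_symm (hd : ∀ z, HasDerivAt e (σ z) z) (hσ : ∀ z, σ z ≠ 0)
    {f f' : ℝ → ℝ} (hf : ∀ z, HasDerivAt f (f' z) z) (w : ℝ) :
    HasDerivAt (f ∘ e.symm) (((f' / σ) ∘ e.symm) w) w := by
  have hsymm : HasDerivAt e.symm (σ (e.symm w))⁻¹ w :=
    (hd _).of_local_left_inverse e.symm.continuous.continuousAt (hσ _)
      (Eventually.of_forall e.apply_symm_apply)
  rw [Function.comp_apply, Pi.div_apply, div_eq_mul_inv]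
  exact (hf _).comp w hsymm

theorem abs_mul_div_comp_symm_comp (hσ : ∀ z, 0 < σ z) (h : ℝ → ℝ) :
    (fun z => |σ z| • ((h / σ) ∘ e.symm) (e z)) = h := by
  funext z
  simp [abs_of_pos (hσ z), mul_div_cancel₀ _ (hσ z).ne']

theorem integrableOn_image_div_comp_symm_iff (hd : ∀ z, HasDerivAt e (σ z) z)
    (hσ : ∀ z, 0 < σ z) {s : Set ℝ} (hs : MeasurableSet s) (h : ℝ → ℝ) :
    IntegrableOn ((h / σ) ∘ e.symm) (e '' s) ↔ IntegrableOn h s := by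
  rw [integrableOn_image_iff_integrableOn_abs_deriv_smul hs
    (fun z _ => (hd z).hasDerivWithinAt) e.injective.injOn, e.abs_mul_div_comp_symm_comp hσ]

theorem setIntegral_image_div_comp_symm (hd : ∀ z, HasDerivAt e (σ z) z)
    (hσ : ∀ z, 0 < σ z) {s : Set ℝ} (hs : MeasurableSet s) (h : ℝ → ℝ) :
    ∫ w in e '' s, ((h / σ) ∘ e.symm) w = ∫ z in s, h z := by
  rw [integral_image_eq_integral_abs_deriv_smul hs (fun z _ => (hd z).hasDerivWithinAt)
    e.injective.injOn, e.abs_mul_div_comp_symm_comp hσ]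

theorem locallyIntegrable_div_comp_symm (hd : ∀ z, HasDerivAt e (σ z) z)
    (hσ : ∀ z, 0 < σ z) {h : ℝ → ℝ} (hh : LocallyIntegrable h) :
    LocallyIntegrable ((h / σ) ∘ e.symm) := by
  refine locallyIntegrable_iff.2 fun K hK => ?_
  have hK' := hK.image e.symm.continuous
  rw [← e.image_symm_image K]
  exact (e.integrableOn_image_div_comp_symm_iff hd hσ hK'.measurableSet h).2
    (hh.integrableOn_isCompact hK')

theorem intervalIntegral_div_comp_symm_le (hc : 0 < c) (hd : ∀ z, HasDerivAt e (σ z) z)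
    (hσ : ∀ z, c ≤ σ z) {k : ℝ → ℝ} {S : ℝ} (hk : LocallyIntegrable k) (hk₀ : 0 ≤ k)
    (hS : ∀ s, ∫ t in s..(s + 1), k t ≤ S) (t : ℝ) :
    ∫ w in t..(t + 1), ((k / σ) ∘ e.symm) w ≤ ⌈c⁻¹⌉₊ * S := by
  have hσ₀ : ∀ z, 0 < σ z := fun z => hc.trans_le (hσ z)
  have hab : e.symm t ≤ e.symm (t + 1) := e.symm.monotone (by linarith)
  have hlen : e.symm (t + 1) - e.symm t ≤ c⁻¹ := by
    have h := mul_sub_le_sub_of_hasDerivAt hd hσ hab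
    rw [e.apply_symm_apply, e.apply_symm_apply, add_sub_cancel_left] at h
    simpa only [one_div] using (le_div_iff₀' hc).2 h
  calc ∫ w in t..(t + 1), ((k / σ) ∘ e.symm) w
      = ∫ w in e '' Icc (e.symm t) (e.symm (t + 1)), ((k / σ) ∘ e.symm) w := by
        rw [e.image_Icc, e.apply_symm_apply, e.apply_symm_apply,
          intervalIntegral.integral_of_le (by linarith), integral_Icc_eq_integral_Ioc]
    _ = ∫ z in e.symm t..e.symm (t + 1), k z := by
        rw [e.setIntegral_image_div_comp_symm hd hσ₀ measurableSet_Icc,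
          intervalIntegral.integral_of_le hab, integral_Icc_eq_integral_Ioc]
    _ ≤ ⌈c⁻¹⌉₊ * S := intervalIntegral_le_ceil_mul hk hk₀ hS hab hlen

end OrderIso

end ChangeOfVariables

noncomputable def quotDeriv (u u' σ σ' : ℝ → ℝ) (z : ℝ) : ℝ :=
  u' z / σ z - u z * σ' z / σ z ^ 2

section QuotientDerivative

variable {u u' σ σ' : ℝ → ℝ}

theorem hasDerivAt_div_quotDeriv {z : ℝ} (hu : HasDerivAt u (u' z) z)
    (hσ : HasDerivAt σ (σ' z) z) (hz : σ z ≠ 0) :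
    HasDerivAt (u / σ) (quotDeriv u u' σ σ' z) z := by
  have hquot : (u' z * σ z - u z * σ' z) / σ z ^ 2 = quotDeriv u u' σ σ' z := by
    rw [quotDeriv]
    field_simp
  exact hquot ▸ hu.div hσ hz

theorem locallyIntegrable_quotDeriv (hu : Continuous u) (hu' : LocallyIntegrable u')
    (hσ : Continuous σ) (hσ' : Continuous σ') (hσ₀ : ∀ z, σ z ≠ 0) :
    LocallyIntegrable (quotDeriv u u' σ σ') := by
  have hquot : Continuous fun z => u z * σ' z / σ z ^ 2 :=
    (hu.mul hσ').div (hσ.pow 2) fun z => pow_ne_zero 2 (hσ₀ z)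
  convert (hu'.mul_continuous (hσ.inv₀ hσ₀)).sub hquot.locallyIntegrable using 1
  funext z
  simp only [quotDeriv, Pi.sub_apply, Pi.inv_apply, div_eq_mul_inv]

theorem abs_quotDeriv_le {c A D z : ℝ} (hc : 0 < c) (hσ : c ≤ σ z) (hu : |u z| ≤ A)
    (hσ' : |σ' z| ≤ D) : |quotDeriv u u' σ σ' z| ≤ c⁻¹ * |u' z| + A * D / c ^ 2 := by
  have hσ₀ : 0 < σ z := hc.trans_le hσ
  calc |quotDeriv u u' σ σ' z| ≤ |u' z| / σ z + |u z| * |σ' z| / σ z ^ 2 := by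
        refine (abs_sub _ _).trans_eq ?_
        rw [abs_div, abs_div, abs_mul, abs_of_pos hσ₀, abs_of_pos (pow_pos hσ₀ 2)]
    _ ≤ |u' z| / c + A * D / c ^ 2 := by
        have hAD : |u z| * |σ' z| ≤ A * D :=
          mul_le_mul hu hσ' (abs_nonneg _) ((abs_nonneg _).trans hu)
        gcongr
        exact (by positivity : 0 ≤ |u z| * |σ' z|).trans hAD
    _ = c⁻¹ * |u' z| + A * D / c ^ 2 := by rw [div_eq_inv_mul]

end QuotientDerivative

theorem abs_mul_add_mul_div_le {a b a' b' A B A' B' c s : ℝ} (ha : 0 ≤ a) (haA : a ≤ A)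
    (hb : 0 ≤ b) (hbB : b ≤ B) (ha' : |a'| ≤ A') (hb' : |b'| ≤ B') (hc : 0 < c) (hcs : c ≤ s) :
    |(a' * b + a * b') / (2 * s)| ≤ (A' * B + A * B') / (2 * c) := by
  have hnum : |a' * b + a * b'| ≤ A' * B + A * B' :=
    calc |a' * b + a * b'| ≤ |a'| * b + a * |b'| := by
          refine (abs_add_le _ _).trans_eq ?_
          rw [abs_mul, abs_mul, abs_of_nonneg ha, abs_of_nonneg hb]
      _ ≤ A' * B + A * B' := by
          gcongr
          · exact (abs_nonneg _).trans ha'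
          · exact ha.trans haA
  rw [abs_div, abs_of_pos (by linarith : (0 : ℝ) < 2 * s)]
  exact div_le_div₀ ((abs_nonneg _).trans hnum) hnum (by positivity) (by linarith)

theorem exists_hasDerivAt_sqrt_mul {ε μ ε' μ' : ℝ → ℝ} {ε₀ ε₁ μ₀ μ₁ A B : ℝ} (hε₀ : 0 < ε₀)
    (hμ₀ : 0 < μ₀) (hεb : ∀ z, ε z ∈ Icc ε₀ ε₁) (hμb : ∀ z, μ z ∈ Icc μ₀ μ₁)
    (hdε : ∀ z, HasDerivAt ε (ε' z) z) (hdμ : ∀ z, HasDerivAt μ (μ' z) z) (hε' : Continuous ε')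
    (hμ' : Continuous μ') (hA : ∀ z, |ε' z| ≤ A) (hB : ∀ z, |μ' z| ≤ B) :
    ∃ σ' : ℝ → ℝ, (∀ z, HasDerivAt (fun z => √(ε z * μ z)) (σ' z) z) ∧ Continuous σ' ∧
      ∀ z, |σ' z| ≤ (A * μ₁ + ε₁ * B) / (2 * √(ε₀ * μ₀)) := by
  have hε : ∀ z, 0 < ε z := fun z => hε₀.trans_le (hεb z).1
  have hμ : ∀ z, 0 < μ z := fun z => hμ₀.trans_le (hμb z).1
  have hσ : ∀ z, 2 * √(ε z * μ z) ≠ 0 := fun z => by have := hε z; have := hμ z; positivity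
  refine ⟨fun z => (ε' z * μ z + ε z * μ' z) / (2 * √(ε z * μ z)),
    fun z => ((hdε z).mul (hdμ z)).sqrt (mul_pos (hε z) (hμ z)).ne', ?_, fun z => ?_⟩
  · have hεc := continuous_of_forall_hasDerivAt hdε
    have hμc := continuous_of_forall_hasDerivAt hdμ
    exact ((hε'.mul hμc).add (hεc.mul hμ')).div (continuous_const.mul (hεc.mul hμc).sqrt) hσ
  · exact abs_mul_add_mul_div_le (hε z).le (hεb z).2 (hμ z).le (hμb z).2 (hA z) (hB z)
      (by positivity) (Real.sqrt_le_sqrt (mul_le_mul (hεb z).1 (hμb z).1 hμ₀.le (hε z).le))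

theorem OrderIso.intervalIntegral_abs_quotDeriv_div_comp_symm_le (e : ℝ ≃o ℝ)
    {σ σ' u u' k : ℝ → ℝ} {c A D S : ℝ} (hc : 0 < c) (hd : ∀ z, HasDerivAt e (σ z) z)
    (hσ : ∀ z, c ≤ σ z) (hσ' : ∀ z, |σ' z| ≤ D) (hu : ∀ z, |u z| ≤ A)
    (hq : LocallyIntegrable (quotDeriv u u' σ σ')) (hk : LocallyIntegrable k)
    (hu'k : ∀ z, |u' z| ≤ k z) (hS : ∀ s, ∫ t in s..(s + 1), k t ≤ S) (t : ℝ) :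
    ∫ w in t..(t + 1), |((quotDeriv u u' σ σ' / σ) ∘ e.symm) w|
      ≤ ⌈c⁻¹⌉₊ * (c⁻¹ * S + A * D / c ^ 2) := by
  have hq_le : ∀ z, |quotDeriv u u' σ σ' z| ≤ c⁻¹ * k z + A * D / c ^ 2 := fun z =>
    (abs_quotDeriv_le hc (hσ z) (hu z) (hσ' z)).trans (by gcongr; exact hu'k z)
  have hwin := e.intervalIntegral_div_comp_symm_le hc hd hσ hq.abs (fun z => abs_nonneg _)
    (intervalIntegral_le_mul_add_of_le hq.abs hk (inv_nonneg.2 hc.le) hq_le hS) t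
  convert hwin using 3 with w
  simp [abs_div, abs_of_pos (hc.trans_le (hσ _))]

/-- Let `0 < ε₀ ≤ ε ≤ ε₁`, `0 < μ₀ ≤ μ ≤ μ₁`, both of class
`W²_{1,loc}(ℝ)` (modelled by classical derivatives `ε', ε''` with `ε''` locally
integrable), with `sup_s ∫_s^{s+1}(|ε''| + |μ''|) ≤ S`.  Define
`y(z) = ∫_0^z √(ε μ)` and `ε̃(y(z)) = ε(z)`, `μ̃(y(z)) = μ(z)`.  Then `y` is a
strictly increasing bijection of `ℝ`, and `ε̃, μ̃` satisfy the same bounds, are of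
class `W²_{1,loc}`, and have uniformly locally integrable second derivatives. -/
theorem liouville_change_of_variables
    (ε μ ε' μ' ε'' μ'' : ℝ → ℝ) (ε₀ ε₁ μ₀ μ₁ S : ℝ)
    (hε₀ : 0 < ε₀) (hμ₀ : 0 < μ₀)
    (hεb : ∀ z, ε₀ ≤ ε z ∧ ε z ≤ ε₁) (hμb : ∀ z, μ₀ ≤ μ z ∧ μ z ≤ μ₁)
    (hdε : ∀ z, HasDerivAt ε (ε' z) z) (hdε' : ∀ z, HasDerivAt ε' (ε'' z) z)
    (hdμ : ∀ z, HasDerivAt μ (μ' z) z) (hdμ' : ∀ z, HasDerivAt μ' (μ'' z) z)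
    (hlocε : LocallyIntegrable ε'' volume) (hlocμ : LocallyIntegrable μ'' volume)
    (hS : ∀ s : ℝ, (∫ t in s..(s + 1), (|ε'' t| + |μ'' t|)) ≤ S)
    (y : ℝ → ℝ)
    (hy : ∀ z, y z = ∫ t in (0:ℝ)..z, Real.sqrt (ε t * μ t)) :
    StrictMono y ∧ Function.Bijective y ∧
    ∃ εt μt εt' μt' εt'' μt'' : ℝ → ℝ,
      (∀ z, εt (y z) = ε z) ∧ (∀ z, μt (y z) = μ z) ∧
      (∀ w, ε₀ ≤ εt w ∧ εt w ≤ ε₁) ∧ (∀ w, μ₀ ≤ μt w ∧ μt w ≤ μ₁) ∧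
      (∀ w, HasDerivAt εt (εt' w) w) ∧ (∀ w, HasDerivAt εt' (εt'' w) w) ∧
      (∀ w, HasDerivAt μt (μt' w) w) ∧ (∀ w, HasDerivAt μt' (μt'' w) w) ∧
      LocallyIntegrable εt'' volume ∧ LocallyIntegrable μt'' volume ∧
      ∃ S' : ℝ, ∀ t : ℝ, (∫ w in t..(t + 1), (|εt'' w| + |μt'' w|)) ≤ S' := by
  set σ : ℝ → ℝ := fun z => √(ε z * μ z)
  set c := √(ε₀ * μ₀)
  have hc : 0 < c := by positivity
  have hσc : ∀ z, c ≤ σ z := fun z =>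
    Real.sqrt_le_sqrt (mul_le_mul (hεb z).1 (hμb z).1 hμ₀.le (hε₀.trans_le (hεb z).1).le)
  have hσpos : ∀ z, 0 < σ z := fun z => hc.trans_le (hσc z)
  have hσ₀ : ∀ z, σ z ≠ 0 := fun z => (hσpos z).ne'
  have hσcont : Continuous σ :=
    ((continuous_of_forall_hasDerivAt hdε).mul (continuous_of_forall_hasDerivAt hdμ)).sqrt
  have hyd : ∀ z, HasDerivAt y (σ z) z := by
    rw [show y = _ from funext hy]
    exact fun z => (hσcont.integral_hasStrictDerivAt 0 z).hasDerivAt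
  obtain ⟨e, rfl⟩ := exists_orderIso_eq_of_hasDerivAt hc hyd hσc
  have hk : LocallyIntegrable fun z => |ε'' z| + |μ'' z| := hlocε.abs.add hlocμ.abs
  have hε''k : ∀ z, |ε'' z| ≤ |ε'' z| + |μ'' z| := fun z => le_add_of_nonneg_right (abs_nonneg _)
  have hμ''k : ∀ z, |μ'' z| ≤ |ε'' z| + |μ'' z| := fun z => le_add_of_nonneg_left (abs_nonneg _)
  have hA := abs_deriv_le_of_forall_mem_Icc hεb hdε hdε' hlocε hk hε''k hS
  have hB := abs_deriv_le_of_forall_mem_Icc hμb hdμ hdμ' hlocμ hk hμ''k hS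
  have hε'c := continuous_of_forall_hasDerivAt hdε'
  have hμ'c := continuous_of_forall_hasDerivAt hdμ'
  obtain ⟨σ', hσd, hσ'cont, hD⟩ :=
    exists_hasDerivAt_sqrt_mul hε₀ hμ₀ hεb hμb hdε hdμ hε'c hμ'c hA hB
  have hF := locallyIntegrable_quotDeriv hε'c hlocε hσcont hσ'cont hσ₀
  have hG := locallyIntegrable_quotDeriv hμ'c hlocμ hσcont hσ'cont hσ₀
  have hF' := e.locallyIntegrable_div_comp_symm hyd hσpos hF
  have hG' := e.locallyIntegrable_div_comp_symm hyd hσpos hG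
  refine ⟨e.strictMono, e.bijective, ε ∘ e.symm, μ ∘ e.symm, (ε' / σ) ∘ e.symm,
    (μ' / σ) ∘ e.symm, (quotDeriv ε' ε'' σ σ' / σ) ∘ e.symm, (quotDeriv μ' μ'' σ σ' / σ) ∘ e.symm,
    fun z => by simp, fun z => by simp, fun w => hεb _, fun w => hμb _,
    e.hasDerivAt_comp_symm hyd hσ₀ hdε,
    e.hasDerivAt_comp_symm hyd hσ₀ fun z => hasDerivAt_div_quotDeriv (hdε' z) (hσd z) (hσ₀ z),
    e.hasDerivAt_comp_symm hyd hσ₀ hdμ,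
    e.hasDerivAt_comp_symm hyd hσ₀ fun z => hasDerivAt_div_quotDeriv (hdμ' z) (hσd z) (hσ₀ z),
    hF', hG', ?_⟩
  exact ⟨_, fun t => (intervalIntegral.integral_add (hF'.abs.intervalIntegrable _ _)
    (hG'.abs.intervalIntegrable _ _)).trans_le <| add_le_add
      (e.intervalIntegral_abs_quotDeriv_div_comp_symm_le hc hyd hσc hD hA hF hk hε''k hS t)
      (e.intervalIntegral_abs_quotDeriv_div_comp_symm_le hc hyd hσc hD hB hG hk hμ''k hS t)⟩
end

section
/- Let ε, μ satisfy 0 < ε₀ ≤ ε ≤ ε₁, 0 < μ₀ ≤ μ ≤ μ₁, and ε − ε_*, μ − μ_* ∈ W^2_1(ℝ) for constants ε_*, μ_*. Then the transformed coefficients ε̃, μ̃ obtained via y(z) = ∫_0^z √(εμ) satisfy ε̃ − ε_* ∈ W^2_1(ℝ) and μ̃ − μ_* ∈ W^2_1(ℝ). -/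
open MeasureTheory Filter Function

/-! The Liouville variable `y` has derivative `g = √(εμ)`, which is pinched between positive
constants and has a bounded derivative, because `ε'` and `μ'` are bounded (their derivatives are
integrable). Hence `y` is a diffeomorphism of `ℝ` with inverse `z`, and `f̃ = f ∘ z` has derivatives
`(f' / g) ∘ z` and `((f'' g - f' g') / g³) ∘ z`. Substituting `w = y x` turns integrability of
`φ ∘ z` into integrability of `g φ`, so the three functions in question pull back to `g (f - c)`,
`f'` and `f'' / g - f' g' / g²`, each a bounded multiple of an integrable function. -/

theorem exists_abs_le_of_integrable_deriv {f f' : ℝ → ℝ} (hf : ∀ x, HasDerivAt f (f' x) x)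
    (hf' : Integrable f') : ∃ C, ∀ x, |f x| ≤ C := by
  refine ⟨|f 0| + ∫ t, |f' t|, fun x => ?_⟩
  have hftc : ∫ t in (0 : ℝ)..x, f' t = f x - f 0 :=
    intervalIntegral.integral_eq_sub_of_hasDerivAt (fun t _ => hf t) hf'.intervalIntegrable
  have hle : |∫ t in (0 : ℝ)..x, f' t| ≤ ∫ t, |f' t| :=
    calc |∫ t in (0 : ℝ)..x, f' t| ≤ ∫ t in Set.uIoc (0 : ℝ) x, |f' t| := by
          simpa only [Real.norm_eq_abs] using
            intervalIntegral.norm_integral_le_integral_norm_uIoc (f := f')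
      _ ≤ ∫ t, |f' t| := setIntegral_le_integral hf'.abs (.of_forall fun _ => abs_nonneg _)
  calc |f x| = |f 0 + (f x - f 0)| := by ring_nf
    _ ≤ |f 0| + |f x - f 0| := abs_add_le _ _
    _ ≤ |f 0| + ∫ t, |f' t| := by rw [← hftc]; gcongr

theorem surjective_of_hasDerivAt_of_forall_le {y g : ℝ → ℝ} {c : ℝ}
    (hy : ∀ x, HasDerivAt y (g x) x) (hc : 0 < c) (hg : ∀ x, c ≤ g x) : Surjective y := by
  have hmono : Monotone fun x => y x - c * x :=
    monotone_of_hasDerivAt_nonneg (fun x => (hy x).sub ((hasDerivAt_id x).const_mul c))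
      fun x => by simpa using hg x
  refine (continuous_iff_continuousAt.2 fun x => (hy x).continuousAt).surjective ?_ ?_
  · refine tendsto_atTop_mono' _ ((eventually_ge_atTop 0).mono fun x hx => ?_)
      (tendsto_atTop_add_const_left _ (y 0) (tendsto_id.const_mul_atTop hc))
    simp only [id]
    linarith [hmono hx]
  · refine tendsto_atBot_mono' _ ((eventually_le_atBot 0).mono fun x hx => ?_)
      (tendsto_atBot_add_const_left _ (y 0) (tendsto_id.const_mul_atBot hc))
    simp only [id]
    linarith [hmono hx]

theorem exists_inverse_hasDerivAt_inv {y g : ℝ → ℝ} {c : ℝ}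
    (hy : ∀ x, HasDerivAt y (g x) x) (hc : 0 < c) (hg : ∀ x, c ≤ g x) :
    ∃ z : ℝ → ℝ, LeftInverse z y ∧ RightInverse z y ∧ ∀ w, HasDerivAt z (g (z w))⁻¹ w := by
  have hgpos : ∀ x, 0 < g x := fun x => hc.trans_le (hg x)
  have hmono := strictMono_of_hasDerivAt_pos hy hgpos
  have hsurj := surjective_of_hasDerivAt_of_forall_le hy hc hg
  set e := hmono.orderIsoOfSurjective y hsurj
  refine ⟨e.symm, hmono.orderIsoOfSurjective_symm_apply_self y hsurj,
    hmono.orderIsoOfSurjective_self_symm_apply y hsurj, fun w => ?_⟩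
  exact (hy _).of_local_left_inverse e.symm.continuous.continuousAt (hgpos _).ne'
    (.of_forall (hmono.orderIsoOfSurjective_self_symm_apply y hsurj))

section Inverse

variable {y g z : ℝ → ℝ}

theorem hasDerivAt_comp_inverse {φ φ' : ℝ → ℝ} (hz : ∀ w, HasDerivAt z (g (z w))⁻¹ w)
    (hφ : ∀ x, HasDerivAt φ (φ' x) x) (w : ℝ) :
    HasDerivAt (fun w => φ (z w)) (φ' (z w) / g (z w)) w := by
  rw [div_eq_mul_inv]
  exact (hφ (z w)).comp w (hz w)

theorem integrable_comp_iff_integrable_mul (hy : ∀ x, HasDerivAt y (g x) x)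
    (hg : ∀ x, 0 < g x) (hzy : LeftInverse z y) (hyz : RightInverse z y) (φ : ℝ → ℝ) :
    Integrable (fun w => φ (z w)) ↔ Integrable (fun x => g x * φ x) := by
  have h := integrableOn_image_iff_integrableOn_abs_deriv_smul MeasurableSet.univ
    (fun x _ => (hy x).hasDerivWithinAt) (strictMono_of_hasDerivAt_pos hy hg).injective.injOn
    (fun w => φ (z w))
  rw [Set.image_univ, hyz.surjective.range_eq, integrableOn_univ, integrableOn_univ] at h
  simpa only [smul_eq_mul, hzy _, abs_of_pos (hg _)] using h

end Inverse

theorem exists_comp_inverse_integrable_derivs {y g g' f f' f'' : ℝ → ℝ} {c₀ c₁ B c : ℝ}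
    (hy : ∀ x, HasDerivAt y (g x) x) (hg : ∀ x, HasDerivAt g (g' x) x)
    (hc₀ : 0 < c₀) (hg_ge : ∀ x, c₀ ≤ g x) (hg_le : ∀ x, g x ≤ c₁) (hg' : ∀ x, |g' x| ≤ B)
    (hf : ∀ x, HasDerivAt f (f' x) x) (hf' : ∀ x, HasDerivAt f' (f'' x) x)
    (hfi : Integrable fun x => f x - c) (hf'i : Integrable f') (hf''i : Integrable f'') :
    ∃ F F' F'' : ℝ → ℝ, (∀ x, F (y x) = f x) ∧ (∀ w, HasDerivAt F (F' w) w) ∧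
      (∀ w, HasDerivAt F' (F'' w) w) ∧ Integrable (fun w => F w - c) ∧
      Integrable F' ∧ Integrable F'' := by
  obtain ⟨z, hzy, hyz, hz⟩ := exists_inverse_hasDerivAt_inv hy hc₀ hg_ge
  have hgpos : ∀ x, 0 < g x := fun x => hc₀.trans_le (hg_ge x)
  have hgc : Continuous g := continuous_iff_continuousAt.2 fun x => (hg x).continuousAt
  have hg'm : AEStronglyMeasurable g' := by
    rw [show g' = deriv g from funext fun x => (hg x).deriv.symm]
    exact aestronglyMeasurable_deriv g volume
  have hq : ∀ x, HasDerivAt (fun x => f' x / g x) ((f'' x * g x - f' x * g' x) / g x ^ 2) x :=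
    fun x => (hf' x).div (hg x) (hgpos x).ne'
  have hchange := integrable_comp_iff_integrable_mul hy hgpos hzy hyz
  refine ⟨fun w => f (z w), fun w => f' (z w) / g (z w),
    fun w => (f'' (z w) * g (z w) - f' (z w) * g' (z w)) / g (z w) ^ 2 / g (z w),
    fun x => congrArg f (hzy x), hasDerivAt_comp_inverse hz hf, hasDerivAt_comp_inverse hz hq,
    (hchange fun x => f x - c).2 ?_, (hchange fun x => f' x / g x).2 ?_,
    (hchange fun x => (f'' x * g x - f' x * g' x) / g x ^ 2 / g x).2 ?_⟩
  · refine hfi.bdd_mul (c := c₁) hgc.aestronglyMeasurable (.of_forall fun x => ?_)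
    rw [Real.norm_eq_abs, abs_of_pos (hgpos x)]
    exact hg_le x
  · refine hf'i.congr (.of_forall fun x => ?_)
    field_simp [(hgpos x).ne']
  · have hpull : (fun x => (g x)⁻¹ * f'' x - g' x / g x ^ 2 * f' x) =
        fun x => g x * ((f'' x * g x - f' x * g' x) / g x ^ 2 / g x) := by
      ext x
      field_simp [(hgpos x).ne']
    rw [← hpull]
    refine (hf''i.bdd_mul (c := c₀⁻¹) (hgc.inv₀ fun x => (hgpos x).ne').aestronglyMeasurable
      (.of_forall fun x => ?_)).sub
      (hf'i.bdd_mul (c := B / c₀ ^ 2) (hg'm.div₀ (hgc.pow 2).aestronglyMeasurable)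
        (.of_forall fun x => ?_))
    · rw [Pi.inv_apply, Real.norm_eq_abs, abs_inv, abs_of_pos (hgpos x)]
      exact inv_anti₀ hc₀ (hg_ge x)
    · rw [Real.norm_eq_abs, abs_div, abs_pow, abs_of_pos (hgpos x)]
      exact div_le_div₀ ((abs_nonneg _).trans (hg' x)) (hg' x) (by positivity)
        (pow_le_pow_left₀ hc₀.le (hg_ge x) 2)

theorem abs_div_two_sqrt_mul_le {a b a' b' a₀ a₁ b₀ b₁ A B : ℝ} (ha₀ : 0 < a₀) (hb₀ : 0 < b₀)
    (ha : a₀ ≤ a ∧ a ≤ a₁) (hb : b₀ ≤ b ∧ b ≤ b₁) (ha' : |a'| ≤ A) (hb' : |b'| ≤ B) :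
    |(a' * b + a * b') / (2 * √(a * b))| ≤ (A * b₁ + a₁ * B) / (2 * √(a₀ * b₀)) := by
  have hapos : 0 < a := ha₀.trans_le ha.1
  have hbpos : 0 < b := hb₀.trans_le hb.1
  have hnum : |a' * b + a * b'| ≤ A * b₁ + a₁ * B :=
    calc |a' * b + a * b'| ≤ |a'| * b + a * |b'| := by
          simpa only [abs_mul, abs_of_pos hapos, abs_of_pos hbpos] using
            abs_add_le (a' * b) (a * b')
      _ ≤ A * b₁ + a₁ * B :=
          add_le_add (mul_le_mul ha' hb.2 hbpos.le ((abs_nonneg _).trans ha'))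
            (mul_le_mul ha.2 hb' (abs_nonneg _) (hapos.le.trans ha.2))
  have hden : √(a₀ * b₀) ≤ √(a * b) := Real.sqrt_le_sqrt (mul_le_mul ha.1 hb.1 hb₀.le hapos.le)
  rw [abs_div, abs_of_pos (by positivity : (0 : ℝ) < 2 * √(a * b))]
  exact div_le_div₀ ((abs_nonneg _).trans hnum) hnum (by positivity) (by gcongr)

/-- Let `0 < ε₀ ≤ ε ≤ ε₁`, `0 < μ₀ ≤ μ ≤ μ₁`, and suppose
`ε − ε_*, μ − μ_* ∈ W²₁(ℝ)` (function and first two derivatives in `L¹`).  Then the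
Liouville-transformed coefficients `ε̃, μ̃` with `ε̃(y(z)) = ε(z)`, `μ̃(y(z)) = μ(z)`,
`y(z) = ∫_0^z √(εμ)`, satisfy `ε̃ − ε_* ∈ W²₁(ℝ)` and `μ̃ − μ_* ∈ W²₁(ℝ)`. -/
theorem transformed_coefficients_stabilize
    (ε μ ε' μ' ε'' μ'' : ℝ → ℝ) (ε₀ ε₁ μ₀ μ₁ εs μs : ℝ)
    (hε₀ : 0 < ε₀) (hμ₀ : 0 < μ₀)
    (hεb : ∀ z, ε₀ ≤ ε z ∧ ε z ≤ ε₁) (hμb : ∀ z, μ₀ ≤ μ z ∧ μ z ≤ μ₁)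
    (hdε : ∀ z, HasDerivAt ε (ε' z) z) (hdε' : ∀ z, HasDerivAt ε' (ε'' z) z)
    (hdμ : ∀ z, HasDerivAt μ (μ' z) z) (hdμ' : ∀ z, HasDerivAt μ' (μ'' z) z)
    (hεW : Integrable (fun z => ε z - εs) volume ∧ Integrable ε' volume ∧
      Integrable ε'' volume)
    (hμW : Integrable (fun z => μ z - μs) volume ∧ Integrable μ' volume ∧
      Integrable μ'' volume)
    (y : ℝ → ℝ)
    (hy : ∀ z, y z = ∫ t in (0:ℝ)..z, Real.sqrt (ε t * μ t)) :
    ∃ εt μt εt' μt' εt'' μt'' : ℝ → ℝ,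
      (∀ z, εt (y z) = ε z) ∧ (∀ z, μt (y z) = μ z) ∧
      (∀ w, HasDerivAt εt (εt' w) w) ∧ (∀ w, HasDerivAt εt' (εt'' w) w) ∧
      (∀ w, HasDerivAt μt (μt' w) w) ∧ (∀ w, HasDerivAt μt' (μt'' w) w) ∧
      (Integrable (fun w => εt w - εs) volume ∧ Integrable εt' volume ∧
        Integrable εt'' volume) ∧
      (Integrable (fun w => μt w - μs) volume ∧ Integrable μt' volume ∧
        Integrable μt'' volume) := by
  have hεμ : ∀ t, 0 < ε t * μ t := fun t =>
    mul_pos (hε₀.trans_le (hεb t).1) (hμ₀.trans_le (hμb t).1)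
  have hg : ∀ x, HasDerivAt (fun t => √(ε t * μ t))
      ((ε' x * μ x + ε x * μ' x) / (2 * √(ε x * μ x))) x := fun x =>
    ((hdε x).mul (hdμ x)).sqrt (hεμ x).ne'
  have hy' : ∀ x, HasDerivAt y (√(ε x * μ x)) x := fun x => by
    rw [funext hy]
    exact ((continuous_iff_continuousAt.2 fun t => (hg t).continuousAt).integral_hasStrictDerivAt
      0 x).hasDerivAt
  have hg_ge : ∀ t, √(ε₀ * μ₀) ≤ √(ε t * μ t) := fun t =>
    Real.sqrt_le_sqrt (mul_le_mul (hεb t).1 (hμb t).1 hμ₀.le (hε₀.trans_le (hεb t).1).le)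
  have hg_le : ∀ t, √(ε t * μ t) ≤ √(ε₁ * μ₁) := fun t =>
    Real.sqrt_le_sqrt (mul_le_mul (hεb t).2 (hμb t).2 (hμ₀.trans_le (hμb t).1).le
      (hε₀.trans_le ((hεb t).1.trans (hεb t).2)).le)
  obtain ⟨Bε, hBε⟩ := exists_abs_le_of_integrable_deriv hdε' hεW.2.2
  obtain ⟨Bμ, hBμ⟩ := exists_abs_le_of_integrable_deriv hdμ' hμW.2.2
  have hg' := fun t => abs_div_two_sqrt_mul_le hε₀ hμ₀ (hεb t) (hμb t) (hBε t) (hBμ t)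
  have hc₀ : 0 < √(ε₀ * μ₀) := Real.sqrt_pos.2 (mul_pos hε₀ hμ₀)
  obtain ⟨εt, εt', εt'', hεt, hdεt, hdεt', hεtW⟩ := exists_comp_inverse_integrable_derivs hy' hg
    hc₀ hg_ge hg_le hg' hdε hdε' hεW.1 hεW.2.1 hεW.2.2
  obtain ⟨μt, μt', μt'', hμt, hdμt, hdμt', hμtW⟩ := exists_comp_inverse_integrable_derivs hy' hg
    hc₀ hg_ge hg_le hg' hdμ hdμ' hμW.1 hμW.2.1 hμW.2.2
  exact ⟨εt, μt, εt', μt', εt'', μt'', hεt, hμt, hdεt, hdεt', hdμt, hdμt', hεtW, hμtW⟩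
end

section
/- Under the stabilization hypotheses (ε − ε_* , μ − μ_* ∈ W^2_1(ℝ), coefficients bounded above and below by positive constants), the potential V(y) = η(y)² − η'(y) + λ ε̃^{-1} μ̃^{-1} satisfies V − λ/(ε_* μ_*) ∈ L¹(ℝ) for every λ ≥ 0. -/
/-!
Each logarithmic derivative `a'/a` (`a = ε̃, μ̃`) lies in `W^{1,1}(ℝ)`: it is integrable because
`a ≥ a₀ > 0`, bounded because `a'` is (its derivative `a''` is integrable), and its derivative
`a''/a - (a'/a)²` is integrable for the same reasons. Hence `η = ¼ ε̃'/ε̃ - ¼ μ̃'/μ̃` is in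
`W^{1,1} ⊆ L^∞`, so `η²` and `η'` are integrable. For the zeroth-order term,
`1/(ε̃μ̃) - 1/(ε_*μ_*) = (ε_*μ_* - ε̃μ̃)/(ε̃μ̃ε_*μ_*)` is integrable once `ε_*μ_* ≥ ε₀μ₀`, and this
holds because on a space of infinite measure a function cannot stay a fixed margin above a
constant while differing from it by an integrable function.
-/

open MeasureTheory

namespace MeasureTheory

variable {α : Type*} [MeasurableSpace α] {μ : Measure α}

lemma le_of_integrable_sub_const (hμ : ¬IsFiniteMeasure μ) {f : α → ℝ} {a c : ℝ}
    (hf : Integrable (fun x => f x - c) μ) (ha : ∀ x, a ≤ f x) : a ≤ c := by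
  by_contra! hca
  have hconst : Integrable (fun _ : α => a - c) μ :=
    hf.mono' aestronglyMeasurable_const <| ae_of_all _ fun x => by
      rw [Real.norm_of_nonneg (sub_pos.2 hca).le]
      linarith [ha x]
  exact hμ ((integrable_const_iff_isFiniteMeasure (sub_pos.2 hca).ne').1 hconst)

lemma Integrable.div_of_le {f g : α → ℝ} {c : ℝ} (hf : Integrable f μ)
    (hg : AEMeasurable g μ) (hc : 0 < c) (hcg : ∀ x, c ≤ g x) :
    Integrable (fun x => f x / g x) μ := by
  simp_rw [div_eq_mul_inv]
  refine hf.mul_bdd (c := c⁻¹) hg.inv.aestronglyMeasurable (ae_of_all _ fun x => ?_)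
  rw [norm_inv, Real.norm_of_nonneg (hc.trans_le (hcg x)).le]
  exact inv_anti₀ hc (hcg x)

lemma Integrable.sq_of_abs_le {f : α → ℝ} {M : ℝ} (hf : Integrable f μ) (hM : ∀ x, |f x| ≤ M) :
    Integrable (fun x => f x ^ 2) μ := by
  simpa only [sq] using hf.bdd_mul hf.aestronglyMeasurable (ae_of_all _ hM)

lemma integrable_mul_sub_mul {f g : α → ℝ} {c d M : ℝ} (hf : Integrable (fun x => f x - c) μ)
    (hg : Integrable (fun x => g x - d) μ) (hfm : AEStronglyMeasurable f μ)
    (hM : ∀ x, |f x| ≤ M) :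
    Integrable (fun x => f x * g x - c * d) μ := by
  refine ((hg.bdd_mul hfm (ae_of_all _ hM)).add (hf.mul_const d)).congr (ae_of_all _ fun x => ?_)
  simp only [Pi.add_apply]
  ring

lemma integrable_inv_sub_inv {f : α → ℝ} {a c : ℝ} (hf : Integrable (fun x => f x - c) μ)
    (hfm : AEMeasurable f μ) (ha : 0 < a) (haf : ∀ x, a ≤ f x) (hac : a ≤ c) :
    Integrable (fun x => (f x)⁻¹ - c⁻¹) μ := by
  refine (Integrable.div_of_le hf.fun_neg (hfm.mul_const c) (mul_pos ha ha) fun x =>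
    mul_le_mul (haf x) hac ha.le (ha.trans_le (haf x)).le).congr (ae_of_all _ fun x => ?_)
  have : f x ≠ 0 := (ha.trans_le (haf x)).ne'
  have : c ≠ 0 := (ha.trans_le hac).ne'
  field_simp
  ring

end MeasureTheory

lemma exists_norm_le_of_hasDerivAt_of_integrable {E : Type*} [NormedAddCommGroup E]
    [NormedSpace ℝ E] [CompleteSpace E] {f f' : ℝ → E} (hd : ∀ x, HasDerivAt f (f' x) x)
    (hi : Integrable f') : ∃ M, ∀ x, ‖f x‖ ≤ M := by
  refine ⟨‖f 0‖ + ∫ t, ‖f' t‖, fun x => ?_⟩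
  have hFTC : ∫ t in (0:ℝ)..x, f' t = f x - f 0 :=
    intervalIntegral.integral_eq_sub_of_hasDerivAt (fun t _ => hd t) hi.intervalIntegrable
  calc ‖f x‖ ≤ ‖f 0‖ + ‖f x - f 0‖ := norm_le_insert' _ _
    _ ≤ ‖f 0‖ + ∫ t, ‖f' t‖ := by
      gcongr
      rw [← hFTC]
      exact (intervalIntegral.norm_integral_le_integral_norm_uIoc).trans
        (setIntegral_le_integral hi.norm (ae_of_all _ fun t => norm_nonneg _))

lemma deriv_rpow_mul_rpow_div {a b : ℝ → ℝ} {a' b' p q x : ℝ} (ha : HasDerivAt a a' x)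
    (hb : HasDerivAt b b' x) (ha0 : 0 < a x) (hb0 : 0 < b x) :
    deriv (fun y => a y ^ p * b y ^ q) x / (a x ^ p * b x ^ q) =
      p * (a' / a x) + q * (b' / b x) := by
  rw [((ha.rpow_const (Or.inl ha0.ne')).fun_mul (hb.rpow_const (Or.inl hb0.ne'))).deriv,
    Real.rpow_sub_one ha0.ne', Real.rpow_sub_one hb0.ne']
  have := (Real.rpow_pos_of_pos ha0 p).ne'
  have := (Real.rpow_pos_of_pos hb0 q).ne'
  field_simp

/-- `W^{1,1}(ℝ)`, restricted to functions with a classical derivative everywhere. -/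
def MemW11 (f : ℝ → ℝ) : Prop :=
  Differentiable ℝ f ∧ Integrable f ∧ Integrable (deriv f)

lemma memW11_of_hasDerivAt {f f' : ℝ → ℝ} (hd : ∀ x, HasDerivAt f (f' x) x)
    (hf : Integrable f) (hf' : Integrable f') : MemW11 f :=
  ⟨fun x => (hd x).differentiableAt, hf, by rwa [funext fun x => (hd x).deriv]⟩

namespace MemW11

variable {f g : ℝ → ℝ}

lemma add (hf : MemW11 f) (hg : MemW11 g) : MemW11 (fun x => f x + g x) :=
  memW11_of_hasDerivAt (fun x => (hf.1 x).hasDerivAt.add (hg.1 x).hasDerivAt)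
    (hf.2.1.add hg.2.1) (hf.2.2.add hg.2.2)

lemma const_mul (hf : MemW11 f) (c : ℝ) : MemW11 (fun x => c * f x) :=
  memW11_of_hasDerivAt (fun x => (hf.1 x).hasDerivAt.const_mul c)
    (hf.2.1.const_mul c) (hf.2.2.const_mul c)

lemma exists_abs_le (hf : MemW11 f) : ∃ M, ∀ x, |f x| ≤ M :=
  exists_norm_le_of_hasDerivAt_of_integrable (fun x => (hf.1 x).hasDerivAt) hf.2.2

lemma integrable_sq (hf : MemW11 f) : Integrable (fun x => f x ^ 2) :=
  hf.2.1.sq_of_abs_le hf.exists_abs_le.choose_spec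

lemma div_of_hasDerivAt {a : ℝ → ℝ} {a₀ : ℝ} (hf : MemW11 f) (ha₀ : 0 < a₀) (ha : ∀ x, a₀ ≤ a x)
    (hda : ∀ x, HasDerivAt a (f x) x) : MemW11 (fun x => f x / a x) := by
  have hne x : a x ≠ 0 := (ha₀.trans_le (ha x)).ne'
  have hderiv x : HasDerivAt (fun y => f y / a y) (deriv f x / a x - (f x / a x) ^ 2) x := by
    refine ((hf.1 x).hasDerivAt.fun_div (hda x) (hne x)).congr_deriv ?_
    field_simp
  have hma : AEMeasurable a :=
    (Differentiable.continuous fun x => (hda x).differentiableAt).aemeasurable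
  obtain ⟨M, hM⟩ := hf.exists_abs_le
  have hbdd x : |f x / a x| ≤ M / a₀ := by
    rw [abs_div, abs_of_pos (ha₀.trans_le (ha x))]
    exact div_le_div₀ ((abs_nonneg _).trans (hM x)) (hM x) ha₀ (ha x)
  have hint : Integrable (fun x => f x / a x) := hf.2.1.div_of_le hma ha₀ ha
  refine memW11_of_hasDerivAt hderiv hint ?_
  exact (hf.2.2.div_of_le hma ha₀ ha).sub (hint.sq_of_abs_le hbdd)

end MemW11

theorem potential_stabilizes_L1_general
    (εt μt εt' μt' εt'' μt'' : ℝ → ℝ) (ε₀ ε₁ μ₀ μ₁ εs μs l : ℝ)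
    (hε₀ : 0 < ε₀) (hμ₀ : 0 < μ₀)
    (hεb : ∀ w, ε₀ ≤ εt w ∧ εt w ≤ ε₁) (hμb : ∀ w, μ₀ ≤ μt w ∧ μt w ≤ μ₁)
    (hdε : ∀ w, HasDerivAt εt (εt' w) w) (hdε' : ∀ w, HasDerivAt εt' (εt'' w) w)
    (hdμ : ∀ w, HasDerivAt μt (μt' w) w) (hdμ' : ∀ w, HasDerivAt μt' (μt'' w) w)
    (hεW : Integrable (fun w => εt w - εs) volume ∧ Integrable εt' volume ∧
      Integrable εt'' volume)
    (hμW : Integrable (fun w => μt w - μs) volume ∧ Integrable μt' volume ∧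
      Integrable μt'' volume)
    (ν η V : ℝ → ℝ)
    (hν : ∀ w, ν w = εt w ^ ((1:ℝ)/4) * μt w ^ (-(1:ℝ)/4))
    (hη : ∀ w, η w = deriv ν w / ν w)
    (hV : ∀ w, V w = (η w) ^ 2 - deriv η w + l / (εt w * μt w)) :
    Integrable (fun w => V w - l / (εs * μs)) volume := by
  obtain ⟨hεs, hε', hε''⟩ := hεW
  obtain ⟨hμs, hμ', hμ''⟩ := hμW
  have hεpos w : 0 < εt w := hε₀.trans_le (hεb w).1
  have hμpos w : 0 < μt w := hμ₀.trans_le (hμb w).1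
  have hη_eq : η = fun w => 1 / 4 * (εt' w / εt w) + -1 / 4 * (μt' w / μt w) := by
    funext w
    rw [hη, funext hν]
    exact deriv_rpow_mul_rpow_div (hdε w) (hdμ w) (hεpos w) (hμpos w)
  have hLε := (memW11_of_hasDerivAt hdε' hε' hε'').div_of_hasDerivAt hε₀ (fun w => (hεb w).1) hdε
  have hLμ := (memW11_of_hasDerivAt hdμ' hμ' hμ'').div_of_hasDerivAt hμ₀ (fun w => (hμb w).1) hdμ
  have hηW : MemW11 η := hη_eq ▸ (hLε.const_mul _).add (hLμ.const_mul _)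
  have hcε : Continuous εt := Differentiable.continuous fun w => (hdε w).differentiableAt
  have hcμ : Continuous μt := Differentiable.continuous fun w => (hdμ w).differentiableAt
  have hεμ : Integrable (fun w => εt w * μt w - εs * μs) :=
    integrable_mul_sub_mul hεs hμs hcε.aestronglyMeasurable
      (fun w => (abs_of_pos (hεpos w)).trans_le (hεb w).2)
  have hεμ_le w : ε₀ * μ₀ ≤ εt w * μt w := mul_le_mul (hεb w).1 (hμb w).1 hμ₀.le (hεpos w).le
  have hεμs : ε₀ * μ₀ ≤ εs * μs :=
    le_of_integrable_sub_const (not_isFiniteMeasure_iff.2 Real.volume_univ) hεμ hεμ_le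
  have hinv := integrable_inv_sub_inv hεμ (hcε.mul hcμ).aemeasurable (mul_pos hε₀ hμ₀) hεμ_le hεμs
  refine ((hηW.integrable_sq.sub hηW.2.2).add (hinv.const_mul l)).congr (ae_of_all _ fun w => ?_)
  simp only [hV, Pi.add_apply, Pi.sub_apply, div_eq_mul_inv]
  ring

/-- Under the stabilization hypotheses (`ε̃ − ε_*, μ̃ − μ_* ∈ W²₁(ℝ)`
for the Liouville-transformed coefficients, which are bounded above and below by
positive constants), the potential `V = η² − η' + λ ε̃⁻¹ μ̃⁻¹`, with
`η = (1/4)(ε̃'/ε̃ − μ̃'/μ̃) = ν'/ν`, `ν = ε̃^{1/4} μ̃^{-1/4}`, satisfies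
`V − λ/(ε_* μ_*) ∈ L¹(ℝ)` for every `λ ≥ 0`. -/
theorem potential_stabilizes_L1
    (εt μt εt' μt' εt'' μt'' : ℝ → ℝ) (ε₀ ε₁ μ₀ μ₁ εs μs l : ℝ)
    (hε₀ : 0 < ε₀) (hμ₀ : 0 < μ₀) (hl : 0 ≤ l)
    (hεb : ∀ w, ε₀ ≤ εt w ∧ εt w ≤ ε₁) (hμb : ∀ w, μ₀ ≤ μt w ∧ μt w ≤ μ₁)
    (hdε : ∀ w, HasDerivAt εt (εt' w) w) (hdε' : ∀ w, HasDerivAt εt' (εt'' w) w)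
    (hdμ : ∀ w, HasDerivAt μt (μt' w) w) (hdμ' : ∀ w, HasDerivAt μt' (μt'' w) w)
    (hεW : Integrable (fun w => εt w - εs) volume ∧ Integrable εt' volume ∧
      Integrable εt'' volume)
    (hμW : Integrable (fun w => μt w - μs) volume ∧ Integrable μt' volume ∧
      Integrable μt'' volume)
    (ν η V : ℝ → ℝ)
    (hν : ∀ w, ν w = εt w ^ ((1:ℝ)/4) * μt w ^ (-(1:ℝ)/4))
    (hη : ∀ w, η w = deriv ν w / ν w)
    (hV : ∀ w, V w = (η w) ^ 2 - deriv η w + l / (εt w * μt w)) :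
    Integrable (fun w => V w - l / (εs * μs)) volume :=
  potential_stabilizes_L1_general εt μt εt' μt' εt'' μt'' ε₀ ε₁ μ₀ μ₁ εs μs l hε₀ hμ₀ hεb hμb hdε
    hdε' hdμ hdμ' hεW hμW ν η V hν hη hV
end

section
/- Let ε, μ be bounded, positive-definite, measurable with ε_* μ_* := limits such that ε(z₀)μ(z₀) > ε_*μ_* at some z₀, with all regularity assumptions for the Liouville transform. Then for λ sufficiently large, the Schrödinger operator H = −d²/dy² + V with V = η² − η' + λ ε̃^{-1}μ̃^{-1} has an eigenvalue strictly below λ/(ε_*μ_*); specifically, there is a test function ζ ∈ W^1_2(ℝ) with h[ζ] < (λ/(ε_*μ_*)) ‖ζ‖²_{L²}. -/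
open MeasureTheory Filter Topology Function

/-!
The potential is `V_λ = (η² - η') + λ/(ε̃μ̃)`, so for a fixed test function `ζ` the form `h[ζ]`
is a `λ`-independent constant plus `λ ∫ ζ²/(ε̃μ̃)`. By continuity `ε̃μ̃ > κ` near `y₀` for some
`κ > ε_*μ_*`; for a bump `ζ` supported there, `h[ζ] ≤ const + (λ/κ) ‖ζ‖²`, which is smaller than
`λ/(ε_*μ_*) ‖ζ‖²` once `λ` is large.
-/

section Integral

variable {α : Type*} [MeasurableSpace α] {μ : Measure α}

/-- If `F` is not integrable, neither is `F + G`, and the Bochner integral is `0 < b`. -/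
theorem integral_add_lt_of_integrable_imp {F G : α → ℝ} {b : ℝ} (hb : 0 < b)
    (hG : Integrable G μ) (h : Integrable F μ → ∫ x, F x ∂μ + ∫ x, G x ∂μ < b) :
    ∫ x, F x + G x ∂μ < b := by
  by_cases hF : Integrable F μ
  · rw [integral_add hF hG]
    exact h hF
  · rw [integral_undef fun hFG => hF (by simpa [Pi.sub_def] using hFG.sub hG)]
    exact hb

theorem eventually_integral_add_mul_lt {F g q : α → ℝ} {c t : ℝ} (hct : c < t) (ht : 0 < t)
    (hg : Integrable g μ) (hq : Integrable q μ) (hq_pos : 0 < ∫ x, q x ∂μ)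
    (hgq : ∀ x, g x ≤ c * q x) :
    ∀ᶠ l in atTop, ∫ x, F x + l * g x ∂μ < l * t * ∫ x, q x ∂μ := by
  set I := ∫ x, q x ∂μ
  have hgap : Tendsto (fun l : ℝ => l * ((t - c) * I)) atTop atTop :=
    tendsto_id.atTop_mul_const (mul_pos (sub_pos.2 hct) hq_pos)
  filter_upwards [eventually_gt_atTop 0, hgap.eventually_gt_atTop (∫ x, F x ∂μ)] with l hl hlF
  refine integral_add_lt_of_integrable_imp (by positivity) (hg.const_mul l) fun _ => ?_
  have hgI : ∫ x, g x ∂μ ≤ c * I := by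
    rw [← integral_const_mul]
    exact integral_mono hg (hq.const_mul c) hgq
  calc ∫ x, F x ∂μ + ∫ x, l * g x ∂μ
      ≤ ∫ x, F x ∂μ + l * (c * I) := by
        rw [integral_const_mul]
        gcongr
    _ < l * t * I := by linarith

end Integral

theorem Continuous.integrable_mul_sq_of_hasCompactSupport {X : Type*} [TopologicalSpace X]
    [MeasurableSpace X] [OpensMeasurableSpace X] {μ : Measure X} [IsFiniteMeasureOnCompacts μ]
    {a ζ : X → ℝ} (hζ : Continuous ζ) (hζ_cpt : HasCompactSupport ζ)
    (ha : ∀ x ∈ tsupport ζ, ContinuousAt a x) :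
    Integrable (fun x => a x * ζ x ^ 2) μ := by
  have htsupport : tsupport (fun x => ζ x ^ 2) = tsupport ζ := by
    simp only [tsupport, support_pow _ two_ne_zero]
  have hcpt : HasCompactSupport fun x => a x * ζ x ^ 2 :=
    (hζ_cpt.comp_left (g := fun y : ℝ => y ^ 2) (zero_pow two_ne_zero)).mul_left
  refine Continuous.integrable_of_hasCompactSupport (continuous_of_tsupport fun x hx => ?_) hcpt
  exact (ha x (htsupport ▸ tsupport_mul_subset_right hx)).mul (hζ.pow 2).continuousAt

theorem exists_contDiff_integral_sq_pos_of_eventually {E : Type*} [NormedAddCommGroup E]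
    [NormedSpace ℝ E] [FiniteDimensional ℝ E] [MeasurableSpace E] [BorelSpace E]
    (μ : Measure E) [IsFiniteMeasureOnCompacts μ] [μ.IsOpenPosMeasure] {n : ℕ∞}
    {x₀ : E} {P : E → Prop} (hP : ∀ᶠ x in 𝓝 x₀, P x) :
    ∃ ζ : E → ℝ, ContDiff ℝ n ζ ∧ HasCompactSupport ζ ∧ 0 < ∫ x, ζ x ^ 2 ∂μ ∧
      ∀ x ∈ tsupport ζ, P x := by
  obtain ⟨r, hr, hrP⟩ := Metric.nhds_basis_closedBall.eventually_iff.1 hP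
  obtain ⟨f, rfl⟩ : ∃ f : ContDiffBump x₀, f.rOut = r :=
    ⟨⟨r / 2, r, by positivity, by linarith⟩, rfl⟩
  have hf_sq : Integrable (fun x => f x ^ 2) μ := by
    simpa using f.continuous.integrable_mul_sq_of_hasCompactSupport (μ := μ) (a := 1)
      f.hasCompactSupport fun _ _ => continuousAt_const
  refine ⟨f, f.contDiff, f.hasCompactSupport, ?_, fun x hx => ?_⟩
  · rw [integral_pos_iff_support_of_nonneg (fun x => sq_nonneg _) hf_sq,
      support_pow _ two_ne_zero, f.support_eq]
    exact Metric.measure_ball_pos μ x₀ hr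
  · rw [f.tsupport_eq] at hx
    exact hrP hx

theorem eigenvalue_below_threshold_for_large_lambda_general
    (εt μt εt' μt' : ℝ → ℝ) (εs μs : ℝ)
    (hεs : 0 < εs) (hμs : 0 < μs)
    (hdε : ∀ w, HasDerivAt εt (εt' w) w)
    (hdμ : ∀ w, HasDerivAt μt (μt' w) w)
    (y₀ : ℝ) (hpt : εs * μs < εt y₀ * μt y₀)
    (η : ℝ → ℝ) (V : ℝ → ℝ → ℝ)
    (hV : ∀ l w, V l w = (η w) ^ 2 - deriv η w + l / (εt w * μt w)) :
    ∃ Λ : ℝ, ∀ l : ℝ, Λ ≤ l →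
      ∃ ζ : ℝ → ℝ, ContDiff ℝ 1 ζ ∧ HasCompactSupport ζ ∧
        0 < (∫ w, (ζ w) ^ 2) ∧
        (∫ w, ((deriv ζ w) ^ 2 + V l w * (ζ w) ^ 2))
          < (l / (εs * μs)) * ∫ w, (ζ w) ^ 2 := by
  have hρ : Continuous fun w => εt w * μt w :=
    (Differentiable.mul (fun w => (hdε w).differentiableAt)
      fun w => (hdμ w).differentiableAt).continuous
  obtain ⟨κ, hκs, hκ₀⟩ := exists_between hpt
  have hκ : 0 < κ := (mul_pos hεs hμs).trans hκs
  obtain ⟨ζ, hζ, hζ_cpt, hζ_pos, hζ_near⟩ := exists_contDiff_integral_sq_pos_of_eventually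
    (n := 1) volume (continuousAt_const.eventually_lt hρ.continuousAt hκ₀)
  have hq : Integrable fun w => ζ w ^ 2 := by
    simpa using hζ.continuous.integrable_mul_sq_of_hasCompactSupport (a := 1) hζ_cpt
      fun _ _ => continuousAt_const
  have hg : Integrable fun w => (εt w * μt w)⁻¹ * ζ w ^ 2 :=
    hζ.continuous.integrable_mul_sq_of_hasCompactSupport hζ_cpt fun w hw =>
      hρ.continuousAt.inv₀ (hκ.trans (hζ_near w hw)).ne'
  have hgq : ∀ w, (εt w * μt w)⁻¹ * ζ w ^ 2 ≤ κ⁻¹ * ζ w ^ 2 := by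
    intro w
    by_cases hw : ζ w = 0
    · simp [hw]
    · exact mul_le_mul_of_nonneg_right
        (inv_anti₀ hκ (hζ_near w (subset_tsupport _ hw)).le) (sq_nonneg _)
  obtain ⟨Λ, hΛ⟩ := eventually_atTop.1 <| eventually_integral_add_mul_lt
    (F := fun w => deriv ζ w ^ 2 + (η w ^ 2 - deriv η w) * ζ w ^ 2)
    (inv_strictAnti₀ (mul_pos hεs hμs) hκs) (by positivity) hg hq hζ_pos hgq
  refine ⟨Λ, fun l hl => ⟨ζ, hζ, hζ_cpt, hζ_pos, ?_⟩⟩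
  convert hΛ l hl using 1
  · congr 1
    ext w
    rw [hV]
    ring
  · rw [div_eq_mul_inv]

/-- Suppose the (Liouville-transformed) coefficients `ε̃, μ̃` are
positive, bounded, of class `W²_{1,loc}`, and `ε̃(y₀)μ̃(y₀) > ε_* μ_*` at some point
`y₀`.  Then for `λ` sufficiently large the Schrödinger form
`h[ζ] = ∫(|ζ'|² + V_λ |ζ|²)`, `V_λ = η² − η' + λ ε̃⁻¹ μ̃⁻¹`, admits a test function
`ζ ∈ W¹₂(ℝ)` with `h[ζ] < (λ/(ε_* μ_*)) ‖ζ‖²_{L²}`; hence `H = −d²/dy² + V_λ` has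
spectrum (an eigenvalue) strictly below `λ/(ε_* μ_*)`. -/
theorem eigenvalue_below_threshold_for_large_lambda
    (εt μt εt' μt' εt'' μt'' : ℝ → ℝ) (ε₀ ε₁ μ₀ μ₁ εs μs : ℝ)
    (hε₀ : 0 < ε₀) (hμ₀ : 0 < μ₀) (hεs : 0 < εs) (hμs : 0 < μs)
    (hεb : ∀ w, ε₀ ≤ εt w ∧ εt w ≤ ε₁) (hμb : ∀ w, μ₀ ≤ μt w ∧ μt w ≤ μ₁)
    (hdε : ∀ w, HasDerivAt εt (εt' w) w) (hdε' : ∀ w, HasDerivAt εt' (εt'' w) w)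
    (hdμ : ∀ w, HasDerivAt μt (μt' w) w) (hdμ' : ∀ w, HasDerivAt μt' (μt'' w) w)
    (hlocε : LocallyIntegrable εt'' volume) (hlocμ : LocallyIntegrable μt'' volume)
    (y₀ : ℝ) (hpt : εs * μs < εt y₀ * μt y₀)
    (ν η : ℝ → ℝ) (V : ℝ → ℝ → ℝ)
    (hν : ∀ w, ν w = εt w ^ ((1:ℝ)/4) * μt w ^ (-(1:ℝ)/4))
    (hη : ∀ w, η w = deriv ν w / ν w)
    (hV : ∀ l w, V l w = (η w) ^ 2 - deriv η w + l / (εt w * μt w)) :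
    ∃ Λ : ℝ, ∀ l : ℝ, Λ ≤ l →
      ∃ ζ : ℝ → ℝ, ContDiff ℝ 1 ζ ∧ HasCompactSupport ζ ∧
        0 < (∫ w, (ζ w) ^ 2) ∧
        (∫ w, ((deriv ζ w) ^ 2 + V l w * (ζ w) ^ 2))
          < (l / (εs * μs)) * ∫ w, (ζ w) ^ 2 :=
  eigenvalue_below_threshold_for_large_lambda_general εt μt εt' μt' εs μs hεs hμs hdε hdμ y₀ hpt η V
    hV
end

section
/- Let H₁ = −d²/dy² + V₁ and H₂ = −d²/dy² + V₂ be periodic Schrödinger operators with common period b whose band edges satisfy |α_{n+1}^{(k)} − π²n²b^{-2} − w_k| < δ and |β_n^{(k)} − π²n²b^{-2} − w_k| < δ for all n ≥ N and k = 1,2, where w₂ > w₁, 0 < δ < (w₂−w₁)/2, and (2N+1)π² > (w₂ − w₁ + 2δ)b². Then [K, ∞) ⊂ σ(H₁) ∪ σ(H₂), where K = π²N²b^{-2} + w₂ + δ. -/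
open MeasureTheory Real

lemma aux_gap_of_notMem (b w δ lam : ℝ) (N : ℕ) (hb : 0 < b) (hδ0 : 0 < δ)
    (α β : ℕ → ℝ) (hab : ∀ n, α n ≤ β n) (hba : ∀ n, β n ≤ α (n + 1))
    (hα : ∀ n, N ≤ n → |α (n + 1) - π ^ 2 * (n : ℝ) ^ 2 / b ^ 2 - w| < δ)
    (hβ : ∀ n, N ≤ n → |β n - π ^ 2 * (n : ℝ) ^ 2 / b ^ 2 - w| < δ)
    (hlam : π ^ 2 * (N : ℝ) ^ 2 / b ^ 2 + w + δ ≤ lam)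
    (hnot : lam ∉ ⋃ n ∈ {n : ℕ | 1 ≤ n}, Set.Icc (α n) (β n)) :
    ∃ n, N ≤ n ∧ |lam - π ^ 2 * (n : ℝ) ^ 2 / b ^ 2 - w| < δ := by
  classical
  have hπ : (0:ℝ) < π := pi_pos
  have hb2 : (0:ℝ) < b ^ 2 := by positivity
  have hπ2 : (0:ℝ) < π ^ 2 := by positivity
  obtain ⟨j, hj⟩ := exists_nat_ge ((lam - w + δ) * b ^ 2 / π ^ 2)
  have hex : ∃ j, lam ≤ β (N + 1 + j) := by
    refine ⟨j, ?_⟩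
    have h1 := (abs_lt.1 (hβ (N + 1 + j) (by omega))).1
    have hsq : (j : ℝ) ≤ ((N + 1 + j : ℕ) : ℝ) ^ 2 := by
      push_cast
      nlinarith [Nat.cast_nonneg (α := ℝ) N, Nat.cast_nonneg (α := ℝ) j]
    have h2 : (lam - w + δ) * b ^ 2 ≤ (j : ℝ) * π ^ 2 := by
      rw [div_le_iff₀ hπ2] at hj; linarith
    have h3 : lam - w + δ ≤ π ^ 2 * ((N + 1 + j : ℕ) : ℝ) ^ 2 / b ^ 2 := by
      rw [le_div_iff₀ hb2]
      nlinarith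
    linarith
  set j0 := Nat.find hex with hj0def
  have hj0 : lam ≤ β (N + 1 + j0) := Nat.find_spec hex
  have hβn : β (N + j0) < lam := by
    rcases Nat.eq_zero_or_pos j0 with h0 | hpos
    · rw [h0]
      have h2 := (abs_lt.1 (hβ N le_rfl)).2
      simpa using lt_of_lt_of_le (by linarith : β N < π ^ 2 * (N : ℝ) ^ 2 / b ^ 2 + w + δ) hlam
    · have hlt := Nat.find_min hex (m := j0 - 1) (by omega)
      push_neg at hlt
      have : N + 1 + (j0 - 1) = N + j0 := by omega
      rwa [this] at hlt
  have hnN : N ≤ N + j0 := by omega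
  have hA : lam < α (N + j0 + 1) := by
    have hmem : lam ∉ Set.Icc (α (N + j0 + 1)) (β (N + j0 + 1)) := fun h =>
      hnot (Set.mem_biUnion (show (N + j0 + 1) ∈ {n : ℕ | 1 ≤ n} by simp) h)
    have heq : N + 1 + j0 = N + j0 + 1 := by omega
    rw [heq] at hj0
    by_contra h
    push_neg at h
    exact hmem ⟨h, hj0⟩
  refine ⟨N + j0, hnN, ?_⟩
  have h1 := (abs_lt.1 (hα (N + j0) hnN)).2
  have h2 := (abs_lt.1 (hβ (N + j0) hnN)).1
  rw [abs_lt]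
  constructor <;> linarith

/-- Let `H₁, H₂` be periodic Schrödinger operators with common
period `b`, spectra `S_k = ⋃_{n ≥ 1} [αₖ(n), βₖ(n)]` with interlaced band edges
satisfying, for `n ≥ N` and `k = 1, 2`, `|αₖ(n+1) − π²n²/b² − w_k| < δ` and
`|βₖ(n) − π²n²/b² − w_k| < δ`, where `w₂ > w₁`, `0 < δ < (w₂ − w₁)/2`, and
`(2N+1)π² > (w₂ − w₁ + 2δ)b²`.  Then `[K, ∞) ⊆ S₁ ∪ S₂` with
`K = π²N²/b² + w₂ + δ`. -/
theorem union_of_band_spectra_contains_ray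
    (b w1 w2 δ K : ℝ) (N : ℕ)
    (hb : 0 < b) (hw : w1 < w2) (hδ0 : 0 < δ) (hδ : δ < (w2 - w1) / 2)
    (hN1 : 1 ≤ N)
    (hN : (2 * (N : ℝ) + 1) * π ^ 2 > (w2 - w1 + 2 * δ) * b ^ 2)
    (α1 β1 α2 β2 : ℕ → ℝ) (S1 S2 : Set ℝ)
    (hS1 : S1 = ⋃ n ∈ {n : ℕ | 1 ≤ n}, Set.Icc (α1 n) (β1 n))
    (hS2 : S2 = ⋃ n ∈ {n : ℕ | 1 ≤ n}, Set.Icc (α2 n) (β2 n))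
    (hab1 : ∀ n, α1 n ≤ β1 n) (hba1 : ∀ n, β1 n ≤ α1 (n + 1))
    (hab2 : ∀ n, α2 n ≤ β2 n) (hba2 : ∀ n, β2 n ≤ α2 (n + 1))
    (hα1 : ∀ n, N ≤ n → |α1 (n + 1) - π ^ 2 * (n : ℝ) ^ 2 / b ^ 2 - w1| < δ)
    (hβ1 : ∀ n, N ≤ n → |β1 n - π ^ 2 * (n : ℝ) ^ 2 / b ^ 2 - w1| < δ)
    (hα2 : ∀ n, N ≤ n → |α2 (n + 1) - π ^ 2 * (n : ℝ) ^ 2 / b ^ 2 - w2| < δ)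
    (hβ2 : ∀ n, N ≤ n → |β2 n - π ^ 2 * (n : ℝ) ^ 2 / b ^ 2 - w2| < δ)
    (hK : K = π ^ 2 * (N : ℝ) ^ 2 / b ^ 2 + w2 + δ) :
    Set.Ici K ⊆ S1 ∪ S2 := by
  intro lam hlamK
  have hπ2 : (0:ℝ) < π ^ 2 := by positivity
  have hb2 : (0:ℝ) < b ^ 2 := by positivity
  have hlamK' : π ^ 2 * (N : ℝ) ^ 2 / b ^ 2 + w2 + δ ≤ lam := by
    rw [hK] at hlamK; exact hlamK
  by_cases h1 : lam ∈ S1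
  · exact Or.inl h1
  by_cases h2 : lam ∈ S2
  · exact Or.inr h2
  exfalso
  rw [hS1] at h1
  rw [hS2] at h2
  obtain ⟨n, hnN, hn⟩ := aux_gap_of_notMem b w1 δ lam N hb hδ0 α1 β1 hab1 hba1 hα1 hβ1
    (by linarith) h1
  obtain ⟨m, hmN, hm⟩ := aux_gap_of_notMem b w2 δ lam N hb hδ0 α2 β2 hab2 hba2 hα2 hβ2
    hlamK' h2
  rw [abs_lt] at hn hm
  -- set x k = π^2 k^2 / b^2
  have hdiff : π ^ 2 * (n : ℝ) ^ 2 / b ^ 2 - π ^ 2 * (m : ℝ) ^ 2 / b ^ 2 > w2 - w1 - 2 * δ := by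
    linarith [hn.2, hm.1]
  have hdiff2 : π ^ 2 * (n : ℝ) ^ 2 / b ^ 2 - π ^ 2 * (m : ℝ) ^ 2 / b ^ 2 < w2 - w1 + 2 * δ := by
    linarith [hn.1, hm.2]
  have hmn : m < n := by
    by_contra h
    push_neg at h
    have : (n : ℝ) ^ 2 ≤ (m : ℝ) ^ 2 := by
      have : (n : ℝ) ≤ m := by exact_mod_cast h
      nlinarith [Nat.cast_nonneg (α := ℝ) n]
    have h3 : π ^ 2 * (n : ℝ) ^ 2 ≤ π ^ 2 * (m : ℝ) ^ 2 := by nlinarith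
    have : π ^ 2 * (n : ℝ) ^ 2 / b ^ 2 ≤ π ^ 2 * (m : ℝ) ^ 2 / b ^ 2 := by gcongr
    linarith
  have hNm : (N : ℝ) ≤ m := by exact_mod_cast hmN
  have hsucc : (m : ℝ) + 1 ≤ n := by exact_mod_cast hmn
  have hnm : (m : ℝ) ^ 2 + (2 * (N : ℝ) + 1) ≤ (n : ℝ) ^ 2 := by nlinarith
  have hlow : w2 - w1 + 2 * δ < π ^ 2 * (n : ℝ) ^ 2 / b ^ 2 - π ^ 2 * (m : ℝ) ^ 2 / b ^ 2 := by
    have heq : π ^ 2 * (n : ℝ) ^ 2 / b ^ 2 - π ^ 2 * (m : ℝ) ^ 2 / b ^ 2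
        = π ^ 2 * ((n : ℝ) ^ 2 - (m : ℝ) ^ 2) / b ^ 2 := by ring
    rw [heq, lt_div_iff₀ hb2]
    nlinarith [mul_le_mul_of_nonneg_left hnm (le_of_lt hπ2)]
  linarith
end
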